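/- arXiv:math/0311315 — 9 statements merged into one kernel-verified Lean document; each statement's English description precedes it below -/
import Mathlib

section
/- Let G be a discrete group and σ a multiplier on G. Then the commutant in B(l²(G)) of the set {L^σ_g : g ∈ G} of left σ-translations equals the von Neumann algebra generated by the right σ̄-translations {R^{σ̄}_g : g ∈ G} (i.e. it equals the double commutant {R^{σ̄}_g : g ∈ G}''). Symmetrically, the commutant of the set of right σ-translations {R^σ_g : g ∈ G} equals the von Neumann algebra generated by the left σ̄-translations {L^{σ̄}_g : g ∈ G}. -/
open scoped ComplexConjugate

noncomputable section

/-- `l²(X)`, the Hilbert space of square-summable complex functions on `X`. -/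
abbrev l2 (X : Type*) : Type _ := lp (fun _ : X => ℂ) 2

/-- A (normalized) multiplier on a discrete group `G`: a `U(1)`-valued 2-cocycle. -/
def IsMultiplier {G : Type*} [Group G] (σ : G → G → ℂ) : Prop :=
  (∀ g h, ‖σ g h‖ = 1) ∧
  (∀ a b c, σ b c * σ a (b * c) = σ (a * b) c * σ a b) ∧
  (∀ g, σ 1 g = 1) ∧ (∀ g, σ g 1 = 1)

/-- `A` acts on `l²(G)^d` (realized as `l²(G × Fin d)`) as the matrix over the twisted
group algebra with coefficient matrices `a g` supported in the finite set `T`, i.e.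
`(Af)(x) = ∑_h a(xh⁻¹) σ(xh⁻¹,h) f(h) = ∑_{g∈T} a(g) σ(g,g⁻¹x) f(g⁻¹x)`. -/
def ActsAsTwisted {G : Type*} [Group G] (σ : G → G → ℂ) (d : ℕ) (T : Finset G)
    (a : G → Matrix (Fin d) (Fin d) ℂ)
    (A : l2 (G × Fin d) →L[ℂ] l2 (G × Fin d)) : Prop :=
  (∀ g, g ∉ T → a g = 0) ∧
  ∀ (f : l2 (G × Fin d)) (x : G) (i : Fin d),
    A f (x, i) = ∑ g ∈ T, ∑ j, a g i j * σ g (g⁻¹ * x) * f (g⁻¹ * x, j)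

/-- `lam` is an eigenvalue of the bounded operator `A` on `l²(X)`. -/
def HasL2Eigenvalue {X : Type*} (A : l2 X →L[ℂ] l2 X) (lam : ℂ) : Prop :=
  ∃ f : l2 X, f ≠ 0 ∧ A f = lam • f

/-- The `σ`-multiplier algebraic eigenvalue property: every matrix over the twisted group
algebra `ℚ̄(G,σ)` acting on `l²(G)^d` has only algebraic eigenvalues. -/
def HasMAEP (G : Type*) [Group G] (σ : G → G → ℂ) : Prop :=
  ∀ (d : ℕ) (T : Finset G) (a : G → Matrix (Fin d) (Fin d) ℂ),
    (∀ g i j, IsAlgebraic ℚ (a g i j)) →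
    ∀ A : l2 (G × Fin d) →L[ℂ] l2 (G × Fin d), ActsAsTwisted σ d T a A →
    ∀ lam : ℂ, HasL2Eigenvalue A lam → IsAlgebraic ℚ lam

/-- The (untwisted) algebraic eigenvalue property. -/
def HasAEP (G : Type*) [Group G] : Prop := HasMAEP G fun _ _ => 1

/-! An operator `T` commuting with all `L^σ_g` is determined by `t = T δ₁`, as `T δ_g = L^σ_g t`,
so it is right twisted convolution by `t`; likewise an operator `S` commuting with all `R^σ̄_g`
is left twisted convolution by `s = S δ₁`. Expanding `S T δ_g` and `T S δ_g` in the basis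
`(δ_x)` gives two sums over `G` that agree termwise by the cocycle identity, so `S T = T S`. The
reverse inclusion holds because every `L^σ_g` commutes with every `R^σ̄_k`. The second statement
is the first one for the multiplier `σ̄`, combined with `X' = X'''`. -/

theorem lp.hasSum_smul_apply_single {ι 𝕜 F : Type*} [DecidableEq ι] [NormedField 𝕜]
    [AddCommMonoid F] [Module 𝕜 F] [TopologicalSpace F]
    (A : lp (fun _ : ι => 𝕜) 2 →L[𝕜] F) (f : lp (fun _ : ι => 𝕜) 2) :
    HasSum (fun i => f i • A (lp.single 2 i 1)) (A f) := by
  refine ((lp.hasSum_single ENNReal.ofNat_ne_top f).mapL A).congr_fun fun i => ?_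
  rw [← map_smul, ← lp.single_smul, smul_eq_mul, mul_one]

theorem lp.ext_single {ι 𝕜 F : Type*} [DecidableEq ι] [NormedField 𝕜]
    [AddCommMonoid F] [Module 𝕜 F] [TopologicalSpace F] [T2Space F]
    {A B : lp (fun _ : ι => 𝕜) 2 →L[𝕜] F}
    (h : ∀ i, A (lp.single 2 i 1) = B (lp.single 2 i 1)) : A = B :=
  lp.ext_continuousLinearMap ENNReal.ofNat_ne_top fun i => ContinuousLinearMap.ext_ring (h i)

namespace IsMultiplier

variable {G : Type*} [Group G] {τ : G → G → ℂ}

theorem mul_conj (hτ : IsMultiplier τ) (a b : G) : τ a b * conj (τ a b) = 1 := by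
  rw [Complex.mul_conj, Complex.normSq_eq_norm_sq, hτ.1, one_pow, Complex.ofReal_one]

theorem ne_zero (hτ : IsMultiplier τ) (a b : G) : τ a b ≠ 0 :=
  left_ne_zero_of_mul_eq_one (hτ.mul_conj a b)

theorem conj_eq_inv (hτ : IsMultiplier τ) (a b : G) : conj (τ a b) = (τ a b)⁻¹ :=
  eq_inv_of_mul_eq_one_right (hτ.mul_conj a b)

theorem conjugate (hτ : IsMultiplier τ) : IsMultiplier fun a b => conj (τ a b) :=
  ⟨fun a b => by rw [Complex.norm_conj, hτ.1], fun a b c => by simp only [← map_mul, hτ.2.1],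
    fun g => by simp only [hτ.2.2.1, map_one], fun g => by simp only [hτ.2.2.2, map_one]⟩

theorem mul_conj_eq_conj_mul (hτ : IsMultiplier τ) (g y k : G) :
    τ g y * conj (τ y k) = conj (τ (g * y) k) * τ g (y * k) := by
  have := hτ.ne_zero y k
  have := hτ.ne_zero (g * y) k
  rw [hτ.conj_eq_inv, hτ.conj_eq_inv]
  field_simp
  linear_combination -hτ.2.1 g y k

theorem mul_mul_conj_eq (hτ : IsMultiplier τ) (a g y c : G) :
    τ g y * τ (g * y) c * conj (τ (a * y) c) = τ g (y * c) * conj (τ a (y * c)) * τ a y := by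
  have := hτ.ne_zero (a * y) c
  have := hτ.ne_zero a (y * c)
  rw [hτ.conj_eq_inv, hτ.conj_eq_inv]
  field_simp
  linear_combination τ g (y * c) * hτ.2.1 a y c - τ a (y * c) * hτ.2.1 g y c

end IsMultiplier

section Translations

variable {G : Type*} [Group G]

def IsLeftTranslation (τ : G → G → ℂ) (L : G → (l2 G →L[ℂ] l2 G)) : Prop :=
  ∀ g f x, L g f x = τ g (g⁻¹ * x) * f (g⁻¹ * x)

def IsRightTranslation (τ : G → G → ℂ) (R : G → (l2 G →L[ℂ] l2 G)) : Prop :=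
  ∀ g f x, R g f x = τ x g * f (x * g)

variable {τ : G → G → ℂ} {L R : G → (l2 G →L[ℂ] l2 G)}

theorem IsLeftTranslation.commute_isRightTranslation (hτ : IsMultiplier τ)
    (hL : IsLeftTranslation τ L) (hR : IsRightTranslation (fun a b => conj (τ a b)) R)
    (g k : G) : L g * R k = R k * L g := by
  refine ContinuousLinearMap.ext fun f => lp.ext (funext fun x => ?_)
  simp only [mul_apply_eq_comp, hL g, hR k]
  rw [← mul_assoc, hτ.mul_conj_eq_conj_mul, mul_inv_cancel_left]
  simp only [mul_assoc]

variable [DecidableEq G]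

theorem IsLeftTranslation.apply_single (hL : IsLeftTranslation τ L) (g x : G) :
    L g (lp.single 2 x 1) = τ g x • lp.single 2 (g * x) 1 := by
  refine lp.ext (funext fun y => ?_)
  simp only [hL g, lp.coeFn_smul, Pi.smul_apply, lp.single_apply, Pi.single_apply,
    inv_mul_eq_iff_eq_mul]
  split_ifs with h
  · rw [h, inv_mul_cancel_left, smul_eq_mul]
  · rw [mul_zero, smul_zero]

theorem IsRightTranslation.apply_single (hR : IsRightTranslation τ R) (k x : G) :
    R k (lp.single 2 (x * k) 1) = τ x k • lp.single 2 x 1 := by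
  refine lp.ext (funext fun y => ?_)
  simp only [hR k, lp.coeFn_smul, Pi.smul_apply, lp.single_apply, Pi.single_apply,
    mul_left_inj]
  split_ifs with h
  · rw [h, smul_eq_mul]
  · rw [mul_zero, smul_zero]

end Translations

section Commutant

variable {G : Type*} [Group G] [DecidableEq G] {τ : G → G → ℂ} {L R : G → (l2 G →L[ℂ] l2 G)}
  {T S : l2 G →L[ℂ] l2 G}

theorem IsLeftTranslation.apply_single_of_mem_centralizer (hτ : IsMultiplier τ)
    (hL : IsLeftTranslation τ L) (hT : T ∈ (Set.range L).centralizer) (g : G) :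
    T (lp.single 2 g 1) = L g (T (lp.single 2 1 1)) := by
  have hδ : L g (lp.single 2 1 1) = lp.single 2 g 1 := by
    rw [hL.apply_single, hτ.2.2.2, one_smul, mul_one]
  rw [← hδ, ← mul_apply_eq_comp, ← hT (L g) ⟨g, rfl⟩, mul_apply_eq_comp]

theorem IsRightTranslation.apply_single_of_mem_centralizer (hτ : IsMultiplier τ)
    (hR : IsRightTranslation (fun a b => conj (τ a b)) R) (hS : S ∈ (Set.range R).centralizer)
    (g : G) : S (lp.single 2 g 1) = τ g g⁻¹ • R g⁻¹ (S (lp.single 2 1 1)) := by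
  have hδ : τ g g⁻¹ • R g⁻¹ (lp.single 2 1 1) = lp.single 2 g 1 := by
    rw [← mul_inv_cancel g, hR.apply_single, smul_smul, hτ.mul_conj, one_smul]
  rw [← hδ, map_smul, ← mul_apply_eq_comp, ← hS (R g⁻¹) ⟨g⁻¹, rfl⟩, mul_apply_eq_comp]

theorem IsLeftTranslation.hasSum_apply_of_mem_centralizer (hτ : IsMultiplier τ)
    (hL : IsLeftTranslation τ L) (hT : T ∈ (Set.range L).centralizer) (f : l2 G) (h : G) :
    HasSum (fun x => f x * (τ x (x⁻¹ * h) * T (lp.single 2 1 1) (x⁻¹ * h))) (T f h) := by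
  refine (lp.hasSum_smul_apply_single ((lp.evalCLM ℂ _ 2 h).comp T) f).congr_fun fun x => ?_
  change _ = f x * T (lp.single 2 x 1) h
  rw [hL.apply_single_of_mem_centralizer hτ hT x, hL x]

theorem IsRightTranslation.hasSum_apply_of_mem_centralizer (hτ : IsMultiplier τ)
    (hR : IsRightTranslation (fun a b => conj (τ a b)) R) (hS : S ∈ (Set.range R).centralizer)
    (f : l2 G) (h : G) :
    HasSum (fun z => f z * (τ z z⁻¹ * (conj (τ h z⁻¹) * S (lp.single 2 1 1) (h * z⁻¹))))
      (S f h) := by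
  refine (lp.hasSum_smul_apply_single ((lp.evalCLM ℂ _ 2 h).comp S) f).congr_fun fun z => ?_
  change _ = f z * S (lp.single 2 z 1) h
  rw [hR.apply_single_of_mem_centralizer hτ hS z, lp.coeFn_smul, Pi.smul_apply, hR z⁻¹,
    smul_eq_mul]

theorem IsLeftTranslation.commute_of_mem_centralizer (hτ : IsMultiplier τ)
    (hL : IsLeftTranslation τ L) (hR : IsRightTranslation (fun a b => conj (τ a b)) R)
    (hT : T ∈ (Set.range L).centralizer) (hS : S ∈ (Set.range R).centralizer) :
    S * T = T * S := by
  set t := T (lp.single 2 1 1)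
  set s := S (lp.single 2 1 1)
  refine lp.ext_single fun g => lp.ext (funext fun h => ?_)
  rw [mul_apply_eq_comp, mul_apply_eq_comp, hL.apply_single_of_mem_centralizer hτ hT g,
    hR.apply_single_of_mem_centralizer hτ hS g, map_smul, lp.coeFn_smul, Pi.smul_apply,
    smul_eq_mul]
  have hST := (Equiv.mulLeft g).hasSum_iff.mpr
    (hR.hasSum_apply_of_mem_centralizer hτ hS (L g t) h)
  have hTS := ((Equiv.divLeft h).hasSum_iff.mpr
    (hL.hasSum_apply_of_mem_centralizer hτ hT (R g⁻¹ s) h)).mul_left (τ g g⁻¹)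
  -- after reindexing by `z = g * y` and `x = h * y⁻¹`, both are sums over `y` of
  -- `t y * s (h * y⁻¹ * g⁻¹)` times cocycle factors, which agree by `mul_mul_conj_eq`
  refine hST.unique (hTS.congr_fun fun y => ?_)
  simp only [Function.comp_apply, Equiv.coe_mulLeft, Equiv.divLeft_apply, div_eq_mul_inv,
    hL g, hR g⁻¹]
  have key := hτ.mul_mul_conj_eq (h * y⁻¹) g y (g * y)⁻¹
  rw [show h * y⁻¹ * y = h by group, show y * (g * y)⁻¹ = g⁻¹ by group] at key
  rw [show g⁻¹ * (g * y) = y by group, show (h * y⁻¹)⁻¹ * h = y by group,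
    show h * (g * y)⁻¹ = h * y⁻¹ * g⁻¹ by group]
  linear_combination (t y * s (h * y⁻¹ * g⁻¹)) * key

theorem IsLeftTranslation.centralizer_range_eq (hτ : IsMultiplier τ)
    (hL : IsLeftTranslation τ L) (hR : IsRightTranslation (fun a b => conj (τ a b)) R) :
    (Set.range L).centralizer = (Set.range R).centralizer.centralizer := by
  refine subset_antisymm (fun T hT S hS => hL.commute_of_mem_centralizer hτ hR hT hS) ?_
  refine Set.centralizer_subset ?_
  rintro _ ⟨g, rfl⟩ _ ⟨k, rfl⟩
  exact (hL.commute_isRightTranslation hτ hR g k).symm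

end Commutant

/-- **Commutant theorem.** For a discrete group `G` with multiplier `σ`, the commutant of
the set of left `σ`-translations on `l²(G)` is the von Neumann algebra generated by the
right `σ̄`-translations, i.e. their double commutant; and symmetrically the commutant of
the right `σ`-translations is the double commutant of the left `σ̄`-translations. -/
theorem commutant_theorem {G : Type*} [Group G] (σ : G → G → ℂ) (hσ : IsMultiplier σ)
    (Lσ Rσ Lσbar Rσbar : G → (l2 G →L[ℂ] l2 G))
    (hL : ∀ g f x, Lσ g f x = σ g (g⁻¹ * x) * f (g⁻¹ * x))
    (hR : ∀ g f x, Rσ g f x = σ x g * f (x * g))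
    (hLbar : ∀ g f x, Lσbar g f x = conj (σ g (g⁻¹ * x)) * f (g⁻¹ * x))
    (hRbar : ∀ g f x, Rσbar g f x = conj (σ x g) * f (x * g)) :
    (Set.range Lσ).centralizer = (Set.range Rσbar).centralizer.centralizer ∧
    (Set.range Rσ).centralizer = (Set.range Lσbar).centralizer.centralizer := by
  classical
  have hR' : IsRightTranslation (fun a b => conj (conj (σ a b))) Rσ := by
    simpa only [IsRightTranslation, Complex.conj_conj] using hR
  refine ⟨IsLeftTranslation.centralizer_range_eq hσ hL hRbar, ?_⟩
  rw [← Set.centralizer_centralizer_centralizer (Set.range Rσ),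
    ← IsLeftTranslation.centralizer_range_eq hσ.conjugate hLbar hR']
end
end

section
/- Let K be an algebraically closed subfield of ℂ and G a discrete group. Then every multiplier σ on G with values in 𝒰(K) is cohomologous, via a map s : G → 𝒰(K), to a multiplier σ' with values in 𝒰(K) satisfying σ'(g,g⁻¹) = 1 for all g ∈ G. -/
open scoped ComplexConjugate

noncomputable section

/-! Since `σ(g,g⁻¹) = σ(g⁻¹,g)`, one may pick `s(g) = s(g⁻¹)` to be a square root of
`σ(g,g⁻¹)` in `K` (with `s(1) = 1`); then `s(g) s(g⁻¹) = σ(g,g⁻¹)`, so dividing `σ` by the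
coboundary of `s` makes it trivial on every pair `(g,g⁻¹)`. -/

theorem Subfield.exists_sqrt_of_isAlgClosed {L : Type*} [Field L] (K : Subfield L)
    [IsAlgClosed K] : ∃ r : L → L, r 1 = 1 ∧ ∀ z ∈ K, r z ∈ K ∧ r z ^ 2 = z := by
  classical
  choose r hr using fun z : K => IsAlgClosed.exists_pow_nat_eq z two_pos
  refine ⟨fun z => if h : z ∈ K ∧ z ≠ 1 then (r ⟨z, h.1⟩ : L) else 1, by simp, fun z hz => ?_⟩
  by_cases h1 : z = 1
  · simp [h1, one_mem]
  · simp only [dif_pos (show z ∈ K ∧ z ≠ 1 from ⟨hz, h1⟩)]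
    exact ⟨(r _).2, congrArg Subtype.val (hr ⟨z, hz⟩)⟩

def divCoboundary {G : Type*} [Group G] (σ : G → G → ℂ) (s : G → ℂ) : G → G → ℂ :=
  fun g h => (s g)⁻¹ * (s h)⁻¹ * s (g * h) * σ g h

section

variable {G : Type*} [Group G] {σ : G → G → ℂ} {s : G → ℂ}

theorem ne_zero_of_norm_eq_one {E : Type*} [NormedAddGroup E] {x : E} (hx : ‖x‖ = 1) :
    x ≠ 0 :=
  norm_ne_zero_iff.mp (hx ▸ one_ne_zero)

theorem IsMultiplier.ne_zero_s3 (hσ : IsMultiplier σ) (g h : G) : σ g h ≠ 0 :=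
  ne_zero_of_norm_eq_one (hσ.1 g h)

theorem IsMultiplier.apply_inv_comm (hσ : IsMultiplier σ) (g : G) : σ g g⁻¹ = σ g⁻¹ g := by
  simpa [hσ.2.2.1, hσ.2.2.2] using (hσ.2.1 g g⁻¹ g).symm

theorem IsMultiplier.divCoboundary (hσ : IsMultiplier σ) (hs : ∀ g, ‖s g‖ = 1)
    (hs1 : s 1 = 1) : IsMultiplier (divCoboundary σ s) := by
  obtain ⟨hnorm, hcoc, hone_left, hone_right⟩ := hσ
  have hs0 (g : G) : s g ≠ 0 := ne_zero_of_norm_eq_one (hs g)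
  refine ⟨fun g h => by simp [_root_.divCoboundary, hs, hnorm], fun a b c => ?_,
    fun g => by simp [_root_.divCoboundary, hs1, hone_left, hs0], fun g => by
      simp [_root_.divCoboundary, hs1, hone_right, hs0]⟩
  simp only [_root_.divCoboundary, mul_assoc]
  field_simp [hs0]
  linear_combination hcoc a b c

theorem eq_mul_divCoboundary (hs : ∀ g, s g ≠ 0) (g h : G) :
    σ g h = s g * s h * (s (g * h))⁻¹ * divCoboundary σ s g h := by
  simp only [divCoboundary]
  field_simp [hs]

theorem divCoboundary_apply_inv {g : G} (hs : s g * s g⁻¹ = σ g g⁻¹) (hσ : σ g g⁻¹ ≠ 0)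
    (hs1 : s 1 = 1) : divCoboundary σ s g g⁻¹ = 1 := by
  rw [divCoboundary, mul_inv_cancel, hs1, mul_one, ← mul_inv, hs, inv_mul_cancel₀ hσ]

theorem divCoboundary_mem {K : Subfield ℂ} (hσK : ∀ g h, σ g h ∈ K) (hsK : ∀ g, s g ∈ K)
    (g h : G) : divCoboundary σ s g h ∈ K :=
  mul_mem (mul_mem (mul_mem (inv_mem (hsK g)) (inv_mem (hsK h))) (hsK _)) (hσK g h)

theorem IsMultiplier.exists_sqrt_apply_inv (hσ : IsMultiplier σ) (K : Subfield ℂ)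
    [IsAlgClosed K] (hσK : ∀ g h, σ g h ∈ K) :
    ∃ s : G → ℂ, s 1 = 1 ∧ (∀ g, s g ∈ K ∧ ‖s g‖ = 1) ∧ ∀ g, s g * s g⁻¹ = σ g g⁻¹ := by
  obtain ⟨r, hr1, hr⟩ := K.exists_sqrt_of_isAlgClosed
  have hsq (g : G) : r (σ g g⁻¹) ^ 2 = σ g g⁻¹ := (hr _ (hσK g g⁻¹)).2
  refine ⟨fun g => r (σ g g⁻¹), by simp [hσ.2.2.1, hr1], fun g => ⟨(hr _ (hσK g g⁻¹)).1, ?_⟩,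
    fun g => ?_⟩
  · have : ‖r (σ g g⁻¹)‖ ^ 2 = 1 := by rw [← norm_pow, hsq, hσ.1]
    exact (pow_eq_one_iff_of_nonneg (norm_nonneg _) two_ne_zero).mp this
  · simp only [inv_inv, ← hσ.apply_inv_comm, ← sq, hsq]

end

/-- If `K` is an algebraically closed subfield of `ℂ`, then every multiplier `σ` on a
discrete group `G` with values in `𝒰(K) = K ∩ U(1)` is cohomologous, via a map
`s : G → 𝒰(K)`, to a multiplier `σ'` with values in `𝒰(K)` satisfying
`σ'(g,g⁻¹) = 1` for all `g ∈ G`. -/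
theorem exists_cohomologous_multiplier_inv_one {G : Type*} [Group G]
    (K : Subfield ℂ) (hK : IsAlgClosed K)
    (σ : G → G → ℂ) (hσ : IsMultiplier σ) (hσK : ∀ g h, σ g h ∈ K) :
    ∃ (s : G → ℂ) (σ' : G → G → ℂ),
      (∀ g, s g ∈ K ∧ ‖s g‖ = 1) ∧
      IsMultiplier σ' ∧ (∀ g h, σ' g h ∈ K) ∧
      (∀ g h, σ g h = s g * s h * conj (s (g * h)) * σ' g h) ∧
      (∀ g : G, σ' g g⁻¹ = 1) := by
  obtain ⟨s, hs1, hs, hs_inv⟩ := hσ.exists_sqrt_apply_inv K hσK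
  refine ⟨s, divCoboundary σ s, hs, hσ.divCoboundary (fun g => (hs g).2) hs1,
    divCoboundary_mem hσK (fun g => (hs g).1), fun g h => ?_,
    fun g => divCoboundary_apply_inv (hs_inv g) (hσ.ne_zero_s3 g g⁻¹) hs1⟩
  rw [← Complex.inv_eq_conj (hs (g * h)).2]
  exact eq_mul_divCoboundary (fun g => ne_zero_of_norm_eq_one (hs g).2) g h
end
end

section
/- Let G be a discrete group and let σ, σ' be cohomologous multipliers on G with values in 𝒰(ℚ̄). If G has the σ-multiplier algebraic eigenvalue property, then G has the σ'-multiplier algebraic eigenvalue property. -/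
open scoped ComplexConjugate

noncomputable section

/-!
If `σ g h = s g * s h * conj (s (g * h)) * σ' g h` with `|s| = 1`, conjugating by the unitary
`f ↦ s · f` of `l²(G)^d` turns the operator of a `σ'`-twisted matrix with coefficients `a g` into
the operator of the `σ`-twisted matrix with coefficients `(s g)⁻¹ • a g`. These coefficients are
still algebraic because `s` is, and conjugation by a unitary preserves `l²`-eigenvalues.
-/

open scoped ENNReal

section UnimodularSMul

variable {α 𝕜 : Type*} [NormedField 𝕜] {E : α → Type*} [∀ i, NormedAddCommGroup (E i)]
  [∀ i, NormedSpace 𝕜 (E i)] {p : ℝ≥0∞}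

theorem Memℓp.unimodular_smul {u : α → 𝕜} (hu : ∀ i, ‖u i‖ = 1) {f : ∀ i, E i}
    (hf : Memℓp f p) : Memℓp (fun i => u i • f i) p :=
  hf.mono' fun i => by rw [norm_smul, hu, one_mul]

variable [Fact (1 ≤ p)]

namespace lp

def unimodularSMul (u : α → 𝕜) (hu : ∀ i, ‖u i‖ = 1) : lp E p ≃ₗᵢ[𝕜] lp E p where
  toFun f := ⟨fun i => u i • f i, (lp.memℓp f).unimodular_smul hu⟩
  invFun f := ⟨fun i => (u i)⁻¹ • f i,
    (lp.memℓp f).unimodular_smul fun i => by rw [norm_inv, hu, inv_one]⟩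
  map_add' f g := lp.ext <| funext fun i => smul_add (u i) (f i) (g i)
  map_smul' c f := lp.ext <| funext fun i => smul_comm (u i) c (f i)
  left_inv f := lp.ext <| funext fun i =>
    inv_smul_smul₀ (norm_ne_zero_iff.1 ((hu i).trans_ne one_ne_zero)) (f i)
  right_inv f := lp.ext <| funext fun i =>
    smul_inv_smul₀ (norm_ne_zero_iff.1 ((hu i).trans_ne one_ne_zero)) (f i)
  norm_map' f := by
    have hp : p ≠ 0 := (zero_lt_one.trans_le Fact.out).ne'
    refine le_antisymm (lp.norm_mono hp fun i => ?_) (lp.norm_mono hp fun i => ?_) <;>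
      simp [norm_smul, hu]

@[simp] theorem unimodularSMul_apply (u : α → 𝕜) (hu : ∀ i, ‖u i‖ = 1) (f : lp E p) (i : α) :
    unimodularSMul u hu f i = u i • f i := rfl

@[simp] theorem unimodularSMul_symm_apply (u : α → 𝕜) (hu : ∀ i, ‖u i‖ = 1) (f : lp E p)
    (i : α) : (unimodularSMul u hu).symm f i = (u i)⁻¹ • f i := rfl

end lp

end UnimodularSMul

theorem HasL2Eigenvalue.conj {X Y : Type*} {A : l2 X →L[ℂ] l2 X} {lam : ℂ}
    (h : HasL2Eigenvalue A lam) (e : l2 X ≃L[ℂ] l2 Y) :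
    HasL2Eigenvalue ((e : l2 X →L[ℂ] l2 Y) ∘L A ∘L (e.symm : l2 Y →L[ℂ] l2 X)) lam := by
  obtain ⟨f, hf0, hAf⟩ := h
  exact ⟨e f, by simpa using hf0, by simp [hAf]⟩

theorem ActsAsTwisted.conj_unimodularSMul {G : Type*} [Group G] {σ σ' : G → G → ℂ}
    {s : G → ℂ} (hs1 : ∀ g, ‖s g‖ = 1)
    (hcoh : ∀ g h, σ g h = s g * s h * conj (s (g * h)) * σ' g h) {d : ℕ} {T : Finset G}
    {a : G → Matrix (Fin d) (Fin d) ℂ} {A : l2 (G × Fin d) →L[ℂ] l2 (G × Fin d)}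
    (hA : ActsAsTwisted σ' d T a A) :
    let e : l2 (G × Fin d) ≃ₗᵢ[ℂ] l2 (G × Fin d) := lp.unimodularSMul (fun x => s x.1) (hs1 ·.1)
    ActsAsTwisted σ d T (fun g => (s g)⁻¹ • a g)
      ((e.symm : l2 (G × Fin d) →L[ℂ] l2 (G × Fin d)) ∘L A ∘L (e : l2 (G × Fin d) →L[ℂ] _)) := by
  intro e
  have hcoh' : ∀ g x, (s g)⁻¹ * σ g (g⁻¹ * x) = (s x)⁻¹ * σ' g (g⁻¹ * x) * s (g⁻¹ * x) := by
    intro g x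
    have hsg : s g ≠ 0 := norm_ne_zero_iff.1 ((hs1 g).trans_ne one_ne_zero)
    rw [hcoh, mul_inv_cancel_left, ← Complex.inv_eq_conj (hs1 x)]
    field_simp
  refine ⟨fun g hg => by simp [hA.1 g hg], fun f x i => ?_⟩
  change (s x)⁻¹ • A (e f) (x, i) = _
  rw [hA.2, smul_eq_mul, Finset.mul_sum]
  refine Finset.sum_congr rfl fun g _ => ?_
  rw [Finset.mul_sum]
  refine Finset.sum_congr rfl fun j _ => ?_
  change (s x)⁻¹ * (a g i j * σ' g (g⁻¹ * x) * (s (g⁻¹ * x) * f (g⁻¹ * x, j)))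
    = (s g)⁻¹ * a g i j * σ g (g⁻¹ * x) * f (g⁻¹ * x, j)
  linear_combination (-(a g i j) * f (g⁻¹ * x, j)) * hcoh' g x

theorem maep_of_cohomologous_general {G : Type*} [Group G]
    (σ σ' : G → G → ℂ)
    (s : G → ℂ) (hsalg : ∀ g, IsAlgebraic ℚ (s g)) (hs1 : ∀ g, ‖s g‖ = 1)
    (hcoh : ∀ g h, σ g h = s g * s h * conj (s (g * h)) * σ' g h)
    (hG : HasMAEP G σ) : HasMAEP G σ' := by
  intro d T a ha A hA lam hlam
  exact hG d T _ (fun g i j => (hsalg g).inv.mul (ha g i j)) _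
    (hA.conj_unimodularSMul hs1 hcoh) lam (hlam.conj _)

/-- The `σ`-multiplier algebraic eigenvalue property depends only on the cohomology
class of the multiplier: if `σ` and `σ'` are cohomologous multipliers with values in
`𝒰(ℚ̄)` and `G` has the `σ`-multiplier algebraic eigenvalue property, then `G` has the
`σ'`-multiplier algebraic eigenvalue property. -/
theorem maep_of_cohomologous {G : Type*} [Group G]
    (σ σ' : G → G → ℂ) (hσ : IsMultiplier σ) (hσ' : IsMultiplier σ')
    (hσalg : ∀ g h, IsAlgebraic ℚ (σ g h)) (hσ'alg : ∀ g h, IsAlgebraic ℚ (σ' g h))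
    (s : G → ℂ) (hsalg : ∀ g, IsAlgebraic ℚ (s g)) (hs1 : ∀ g, ‖s g‖ = 1)
    (hcoh : ∀ g h, σ g h = s g * s h * conj (s (g * h)) * σ' g h)
    (hG : HasMAEP G σ) : HasMAEP G σ' :=
  maep_of_cohomologous_general σ σ' s hsalg hs1 hcoh hG
end
end

section
/- Let G be a discrete group, σ a rational multiplier on G with σ^r = 1, K a subfield of ℂ containing the r-th roots of unity, and A^σ ∈ M_d(K(G,σ)) acting on l²(G)^d. Let G^σ be the central extension of G by ℤ_r determined by σ and let Ã = Ψ(A^σ) ∈ M_d(K·G^σ) act on l²(G^σ)^d by left multiplication. Then spec(A^σ) ⊆ spec(Ã) and specpoint(A^σ) ⊆ specpoint(Ã); in particular every eigenvalue of A^σ is an eigenvalue of Ã. -/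
open scoped ComplexConjugate

noncomputable section

/-- The underlying set of the central extension `G^σ = ℤ_r ×_σ G` of `G` by the `r`-th
roots of unity determined by a rational multiplier `σ` with `σ^r = 1`. -/
def CentExt (G : Type*) (r : ℕ) : Type _ := {z : ℂ // z ^ r = 1} × G

/-- The group structure on `G^σ`: `(z₁,g₁)·(z₂,g₂) = (z₁z₂σ(g₁,g₂), g₁g₂)`. -/
def centExtGroup {G : Type*} [Group G] (σ : G → G → ℂ) (r : ℕ) (hr : 0 < r)
    (hσ : IsMultiplier σ) (hrat : ∀ g h, σ g h ^ r = 1) : Group (CentExt G r) := by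
  obtain ⟨habs, hcoc, h1l, h1r⟩ := hσ
  letI : Mul (CentExt G r) := ⟨fun p q =>
    ⟨⟨p.1.1 * q.1.1 * σ p.2 q.2, by
        rw [mul_pow, mul_pow, p.1.2, q.1.2, hrat, one_mul, one_mul]⟩, p.2 * q.2⟩⟩
  letI : One (CentExt G r) := ⟨⟨⟨1, one_pow r⟩, 1⟩⟩
  letI : Inv (CentExt G r) := ⟨fun p =>
    ⟨⟨(p.1.1 * σ p.2 p.2⁻¹)⁻¹, by
        rw [inv_pow, mul_pow, p.1.2, hrat, one_mul, inv_one]⟩, p.2⁻¹⟩⟩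
  refine Group.ofLeftAxioms ?_ ?_ ?_
  · intro p q t
    refine Prod.ext (Subtype.ext ?_) (mul_assoc _ _ _)
    show p.1.1 * q.1.1 * σ p.2 q.2 * t.1.1 * σ (p.2 * q.2) t.2
        = p.1.1 * (q.1.1 * t.1.1 * σ q.2 t.2) * σ p.2 (q.2 * t.2)
    linear_combination (-(p.1.1 * q.1.1 * t.1.1)) * hcoc p.2 q.2 t.2
  · intro p
    refine Prod.ext (Subtype.ext ?_) (one_mul _)
    show (1 : ℂ) * p.1.1 * σ 1 p.2 = p.1.1
    rw [h1l, one_mul, mul_one]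
  · intro p
    have hz : p.1.1 ≠ 0 := by
      intro h
      have h2 := p.1.2
      rw [h, zero_pow hr.ne'] at h2
      exact zero_ne_one h2
    have hsne : σ p.2 p.2⁻¹ ≠ 0 := by
      intro h
      have h2 := hrat p.2 p.2⁻¹
      rw [h, zero_pow hr.ne'] at h2
      exact zero_ne_one h2
    have hsymm : σ p.2⁻¹ p.2 = σ p.2 p.2⁻¹ := by
      have h := hcoc p.2 p.2⁻¹ p.2
      rw [inv_mul_cancel, mul_inv_cancel, h1r, h1l, mul_one, one_mul] at h
      exact h
    refine Prod.ext (Subtype.ext ?_) (inv_mul_cancel _)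
    show (p.1.1 * σ p.2 p.2⁻¹)⁻¹ * p.1.1 * σ p.2⁻¹ p.2 = 1
    rw [hsymm, mul_assoc, inv_mul_cancel₀ (mul_ne_zero hz hsne)]

/-!
Write `l²(G^σ)^d = l²(ℤ_r × G × Fin d)`. Since `(1, g)⁻¹ (z, x) = (z σ(g, g⁻¹x)⁻¹, g⁻¹x)` in `G^σ`,
the map `V f ((z, x), i) = z⁻¹ f (x, i)` satisfies `Ã V = V A^σ`, and the fibrewise average
`W h (x, i) = r⁻¹ ∑_z z h ((z, x), i)` satisfies `W Ã = A^σ W` and `W V = 1`. So `V` carries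
eigenvectors of `A^σ` to eigenvectors of `Ã`, and if `C` inverts `λ - Ã` then `W C V` inverts
`λ - A^σ`.
-/

namespace l2

variable {X Y : Type*}

lemma sum_sq_le_norm_sq (f : l2 X) (s : Finset X) : ∑ x ∈ s, ‖f x‖ ^ 2 ≤ ‖f‖ ^ 2 := by
  simpa using lp.sum_rpow_le_norm_rpow (by simp : 0 < (2 : ENNReal).toReal) f s

lemma memℓp_of_sum_sq_le {F : X → ℂ} {C : ℝ} (h : ∀ s : Finset X, ∑ x ∈ s, ‖F x‖ ^ 2 ≤ C) :
    Memℓp F 2 :=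
  memℓp_gen' (C := C) (by simpa using h)

lemma norm_le_of_sum_sq_le {f : l2 X} {C : ℝ} (hC : 0 ≤ C)
    (h : ∀ s : Finset X, ∑ x ∈ s, ‖f x‖ ^ 2 ≤ C ^ 2) : ‖f‖ ≤ C :=
  lp.norm_le_of_forall_sum_le (by simp) hC (by simpa using h)

lemma sum_sq_comp_le_norm_sq {φ : X → Y} (hφ : φ.Injective) (f : l2 Y) (s : Finset X) :
    ∑ x ∈ s, ‖f (φ x)‖ ^ 2 ≤ ‖f‖ ^ 2 := by
  simpa [Finset.sum_map] using sum_sq_le_norm_sq f (s.map ⟨φ, hφ⟩)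

def restrict {φ : X → Y} (hφ : φ.Injective) : l2 Y →L[ℂ] l2 X :=
  LinearMap.mkContinuous
    { toFun := fun f => ⟨fun x => f (φ x), memℓp_of_sum_sq_le (sum_sq_comp_le_norm_sq hφ f)⟩
      map_add' := fun f g => rfl
      map_smul' := fun c f => rfl }
    1 fun f => by
      rw [one_mul]
      exact norm_le_of_sum_sq_le (norm_nonneg f) (sum_sq_comp_le_norm_sq hφ f)

@[simp] lemma restrict_apply {φ : X → Y} (hφ : φ.Injective) (f : l2 Y) (x : X) :
    restrict hφ f x = f (φ x) := rfl

section Fiber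

variable {Z : Type*} [Fintype Z] (e : Y ≃ Z × X)

lemma sum_sq_fiber_le (u : Z → ℂ) (f : l2 X) (s : Finset Y) :
    ∑ y ∈ s, ‖u (e y).1 * f (e y).2‖ ^ 2 ≤ (∑ z, ‖u z‖ ^ 2) * ‖f‖ ^ 2 := by
  classical
  set S := (s.map e.toEmbedding).image Prod.snd
  calc ∑ y ∈ s, ‖u (e y).1 * f (e y).2‖ ^ 2
      = ∑ p ∈ s.map e.toEmbedding, ‖u p.1‖ ^ 2 * ‖f p.2‖ ^ 2 := by
        simp [Finset.sum_map, mul_pow]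
    _ ≤ ∑ p ∈ Finset.univ ×ˢ S, ‖u p.1‖ ^ 2 * ‖f p.2‖ ^ 2 :=
        Finset.sum_le_sum_of_subset_of_nonneg
          (fun p hp => Finset.mem_product.2 ⟨Finset.mem_univ _, Finset.mem_image_of_mem _ hp⟩)
          (fun _ _ _ => by positivity)
    _ = (∑ z, ‖u z‖ ^ 2) * ∑ x ∈ S, ‖f x‖ ^ 2 := by
        rw [Finset.sum_product, Finset.sum_mul_sum]
    _ ≤ (∑ z, ‖u z‖ ^ 2) * ‖f‖ ^ 2 := by
        gcongr
        exact sum_sq_le_norm_sq f S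

def fiberLift (u : Z → ℂ) : l2 X →L[ℂ] l2 Y :=
  LinearMap.mkContinuous
    { toFun := fun f => ⟨fun y => u (e y).1 * f (e y).2,
        memℓp_of_sum_sq_le (sum_sq_fiber_le e u f)⟩
      map_add' := fun f g => lp.ext <| funext fun y => mul_add _ _ _
      map_smul' := fun c f => lp.ext <| funext fun y => mul_left_comm _ _ _ }
    √(∑ z, ‖u z‖ ^ 2) fun f => by
      refine norm_le_of_sum_sq_le (by positivity) fun s => ?_
      rw [mul_pow, Real.sq_sqrt (by positivity)]
      exact sum_sq_fiber_le e u f s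

@[simp] lemma fiberLift_apply (u : Z → ℂ) (f : l2 X) (y : Y) :
    fiberLift e u f y = u (e y).1 * f (e y).2 := rfl

def fiberSum (v : Z → ℂ) : l2 Y →L[ℂ] l2 X :=
  ∑ z, v z • restrict (e.symm.injective.comp (Prod.mk_right_injective z))

@[simp] lemma fiberSum_apply (v : Z → ℂ) (h : l2 Y) (x : X) :
    fiberSum e v h x = ∑ z, v z * h (e.symm (z, x)) := by
  simp only [fiberSum, _root_.sum_apply, lp.coeFn_sum, Finset.sum_apply, _root_.smul_apply,
    lp.coeFn_smul, Pi.smul_apply, restrict_apply, smul_eq_mul, Function.comp_apply]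

lemma fiberSum_comp_fiberLift (u v : Z → ℂ) :
    (fiberSum e v).comp (fiberLift e u) = (∑ z, v z * u z) • ContinuousLinearMap.id ℂ (l2 X) := by
  ext f x
  simp [Finset.sum_mul, mul_assoc]

end Fiber

end l2

section Intertwining

open ContinuousLinearMap

variable {𝕜 E F : Type*} [NontriviallyNormedField 𝕜] [NormedAddCommGroup E] [NormedSpace 𝕜 E]
  [NormedAddCommGroup F] [NormedSpace 𝕜 F] {A : E →L[𝕜] E} {B : F →L[𝕜] F}
  {V : E →L[𝕜] F} {W : F →L[𝕜] E}

lemma injective_of_comp_eq_id (hWV : W ∘L V = ContinuousLinearMap.id 𝕜 E) :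
    Function.Injective V :=
  Function.LeftInverse.injective (g := W) fun f => by simpa using DFunLike.congr_fun hWV f

lemma spectrum_subset_of_intertwining (hV : B ∘L V = V ∘L A) (hW : W ∘L B = A ∘L W)
    (hWV : W ∘L V = ContinuousLinearMap.id 𝕜 E) : spectrum 𝕜 A ⊆ spectrum 𝕜 B := by
  intro μ hμA hμB
  apply hμA
  obtain ⟨C, hC⟩ := hμB
  have hLW : (algebraMap 𝕜 _ μ - A) ∘L W = W ∘L (algebraMap 𝕜 _ μ - B) := by
    simp [Algebra.algebraMap_eq_smul_one, sub_comp, comp_sub, hW, one_def]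
  have hLV : (algebraMap 𝕜 _ μ - B) ∘L V = V ∘L (algebraMap 𝕜 _ μ - A) := by
    simp [Algebra.algebraMap_eq_smul_one, sub_comp, comp_sub, hV, one_def]
  have hCL : (↑C⁻¹ : F →L[𝕜] F) ∘L (algebraMap 𝕜 _ μ - B) = ContinuousLinearMap.id 𝕜 F := by
    rw [← hC, ← mul_def, Units.inv_mul, one_def]
  have hLC : (algebraMap 𝕜 _ μ - B) ∘L (↑C⁻¹ : F →L[𝕜] F) = ContinuousLinearMap.id 𝕜 F := by
    rw [← hC, ← mul_def, Units.mul_inv, one_def]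
  refine isUnit_iff_exists.2 ⟨W ∘L (↑C⁻¹ : F →L[𝕜] F) ∘L V, ?_, ?_⟩
  · rw [mul_def, ← comp_assoc, hLW, comp_assoc, ← comp_assoc _ _ V, hLC, id_comp, hWV, one_def]
  · rw [mul_def, comp_assoc, comp_assoc, ← hLV, ← comp_assoc _ _ V, hCL, id_comp, hWV, one_def]

end Intertwining

lemma HasL2Eigenvalue.of_intertwining {X Y : Type*} {A : l2 X →L[ℂ] l2 X}
    {B : l2 Y →L[ℂ] l2 Y} {V : l2 X →L[ℂ] l2 Y} (hV : B ∘L V = V ∘L A)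
    (hVinj : Function.Injective V) {μ : ℂ} (h : HasL2Eigenvalue A μ) : HasL2Eigenvalue B μ := by
  obtain ⟨f, hf0, hf⟩ := h
  refine ⟨V f, (map_ne_zero_iff V hVinj).2 hf0, ?_⟩
  rw [← ContinuousLinearMap.comp_apply, hV, ContinuousLinearMap.comp_apply, hf, map_smul]

section CentralExtension

open ContinuousLinearMap

variable {G : Type*} {r : ℕ}

lemma ne_zero_of_pow_eq_one {M₀ : Type*} [MonoidWithZero M₀] [Nontrivial M₀] {z : M₀}
    (hr : 0 < r) (hz : z ^ r = 1) : z ≠ 0 :=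
  (IsUnit.of_pow_eq_one hz hr.ne').ne_zero

abbrev rootsOfUnityFintype (hr : 0 < r) : Fintype {z : ℂ // z ^ r = 1} :=
  Fintype.ofFinset (Polynomial.nthRootsFinset r (1 : ℂ))
    fun _ => Polynomial.mem_nthRootsFinset hr 1

def CentExt.mk (z : {z : ℂ // z ^ r = 1}) (g : G) : CentExt G r := (z, g)

def CentExt.sec (g : G) : CentExt G r := CentExt.mk ⟨1, one_pow r⟩ g

lemma CentExt.sec_injective : Function.Injective (CentExt.sec : G → CentExt G r) :=
  fun _ _ h => congrArg Prod.snd h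

open scoped Classical in
lemma ActsAsTwisted.untwisted_apply [Group (CentExt G r)] {d : ℕ} {T : Finset G}
    {a : G → Matrix (Fin d) (Fin d) ℂ} (ha : ∀ g, g ∉ T → a g = 0)
    {T' : Finset (CentExt G r)} {B : l2 (CentExt G r × Fin d) →L[ℂ] l2 (CentExt G r × Fin d)}
    (hB : ActsAsTwisted (fun _ _ => (1 : ℂ)) d T' (fun p => if p.1.1 = 1 then a p.2 else 0) B)
    (h : l2 (CentExt G r × Fin d)) (y : CentExt G r) (i : Fin d) :
    B h (y, i) = ∑ g ∈ T, ∑ j, a g i j * h ((CentExt.sec g)⁻¹ * y, j) := by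
  rw [hB.2]
  symm
  refine Finset.sum_bij_ne_zero (fun g _ _ => CentExt.sec g) (fun g _ hg => ?_)
    (fun _ _ _ _ _ _ h => CentExt.sec_injective h) (fun p hp hp0 => ?_)
    (fun g _ _ => by simp [CentExt.sec, CentExt.mk])
  · by_contra hT'
    have := hB.1 _ hT'
    simp only [CentExt.sec, CentExt.mk, if_true] at this
    simp [this] at hg
  · obtain ⟨⟨z, hz⟩, g⟩ := p
    by_cases hz1 : z = 1
    · subst hz1
      have hgT : g ∈ T := by
        by_contra hgT
        simp [ha _ hgT] at hp0
      exact ⟨g, hgT, by simpa [CentExt.sec, CentExt.mk] using hp0, rfl⟩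
    · simp [hz1] at hp0

def CentExt.fiberEquiv (d : ℕ) : CentExt G r × Fin d ≃ {z : ℂ // z ^ r = 1} × (G × Fin d) where
  toFun p := (p.1.1, p.1.2, p.2)
  invFun q := (CentExt.mk q.1 q.2.1, q.2.2)
  left_inv _ := rfl
  right_inv _ := rfl

@[simp] lemma CentExt.fiberEquiv_apply {d : ℕ} (p : CentExt G r × Fin d) :
    CentExt.fiberEquiv d p = (p.1.1, p.1.2, p.2) := rfl

@[simp] lemma CentExt.fiberEquiv_symm_apply {d : ℕ} (q : {z : ℂ // z ^ r = 1} × (G × Fin d)) :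
    (CentExt.fiberEquiv d).symm q = (CentExt.mk q.1 q.2.1, q.2.2) := rfl

section Lift

variable [Fintype {z : ℂ // z ^ r = 1}]

def CentExt.liftCLM (d : ℕ) : l2 (G × Fin d) →L[ℂ] l2 (CentExt G r × Fin d) :=
  l2.fiberLift (CentExt.fiberEquiv d) fun z => (z : ℂ)⁻¹

def CentExt.averageCLM (d : ℕ) : l2 (CentExt G r × Fin d) →L[ℂ] l2 (G × Fin d) :=
  (Fintype.card {z : ℂ // z ^ r = 1} : ℂ)⁻¹ • l2.fiberSum (CentExt.fiberEquiv d) fun z => (z : ℂ)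

lemma CentExt.averageCLM_comp_liftCLM (hr : 0 < r) (d : ℕ) :
    CentExt.averageCLM (r := r) d ∘L CentExt.liftCLM d =
      ContinuousLinearMap.id ℂ (l2 (G × Fin d)) := by
  have : Nonempty {z : ℂ // z ^ r = 1} := ⟨⟨1, one_pow r⟩⟩
  have hcard : (Fintype.card {z : ℂ // z ^ r = 1} : ℂ) ≠ 0 :=
    Nat.cast_ne_zero.2 Fintype.card_ne_zero
  have hsum : ∑ z : {z : ℂ // z ^ r = 1}, (z : ℂ) * (z : ℂ)⁻¹ =
      Fintype.card {z : ℂ // z ^ r = 1} := by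
    simp [fun z : {z : ℂ // z ^ r = 1} => mul_inv_cancel₀ (ne_zero_of_pow_eq_one hr z.2)]
  unfold CentExt.averageCLM CentExt.liftCLM
  rw [smul_comp, l2.fiberSum_comp_fiberLift, hsum, smul_smul, inv_mul_cancel₀ hcard, one_smul]

end Lift

variable [Group G] {σ : G → G → ℂ} (hσ : IsMultiplier σ) (hr : 0 < r) (hrat : ∀ g h, σ g h ^ r = 1)
include hσ hr hrat

lemma CentExt.sec_inv_mul_snd (g : G) (y : CentExt G r) :
    letI := centExtGroup σ r hr hσ hrat
    ((CentExt.sec g)⁻¹ * y).2 = g⁻¹ * y.2 := by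
  -- `centExtGroup` destructs `hσ`, so its operations only compute once `hσ` is split.
  rcases hσ with ⟨_, _, _, _⟩
  rfl

lemma CentExt.sec_inv_mul_fst (g : G) (y : CentExt G r) :
    letI := centExtGroup σ r hr hσ hrat
    ((CentExt.sec g)⁻¹ * y).1.1 = y.1.1 * (σ g (g⁻¹ * y.2))⁻¹ := by
  have hσ0 := ne_zero_of_pow_eq_one hr (hrat g (g⁻¹ * y.2))
  have hσ0' := ne_zero_of_pow_eq_one hr (hrat g⁻¹ y.2)
  rcases hσ with ⟨_, hcoc, h1l, _⟩
  show (1 * σ g g⁻¹)⁻¹ * y.1.1 * σ g⁻¹ y.2 = y.1.1 * (σ g (g⁻¹ * y.2))⁻¹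
  have hcancel := hcoc g g⁻¹ y.2
  rw [mul_inv_cancel, h1l, one_mul] at hcancel
  rw [← hcancel]
  field_simp

variable [Fintype {z : ℂ // z ^ r = 1}]

lemma CentExt.sum_mul_sec_inv_mul (F : CentExt G r → ℂ) (g x : G) :
    letI := centExtGroup σ r hr hσ hrat
    ∑ z : {z : ℂ // z ^ r = 1}, (z : ℂ) * F ((CentExt.sec g)⁻¹ * CentExt.mk z x)
      = σ g (g⁻¹ * x) * ∑ z : {z : ℂ // z ^ r = 1}, (z : ℂ) * F (CentExt.mk z (g⁻¹ * x)) := by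
  let := centExtGroup σ r hr hσ hrat
  set c := σ g (g⁻¹ * x)
  have hc0 : c ≠ 0 := ne_zero_of_pow_eq_one hr (hrat _ _)
  let E : {z : ℂ // z ^ r = 1} ≃ {z : ℂ // z ^ r = 1} :=
    (Equiv.mulRight₀ c⁻¹ (inv_ne_zero hc0)).subtypeEquiv fun z => by simp [mul_pow, c, hrat]
  have hE : ∀ z, (CentExt.sec g)⁻¹ * CentExt.mk z x = CentExt.mk (E z) (g⁻¹ * x) :=
    fun z => Prod.ext (Subtype.ext (CentExt.sec_inv_mul_fst hσ hr hrat g _))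
      (CentExt.sec_inv_mul_snd hσ hr hrat g _)
  rw [Finset.mul_sum, ← E.sum_comp fun w => c * (w * F (CentExt.mk w (g⁻¹ * x)))]
  refine Finset.sum_congr rfl fun z _ => ?_
  rw [hE]
  simp [E]
  field_simp

variable {d : ℕ} {T : Finset G} {a : G → Matrix (Fin d) (Fin d) ℂ}
  {A : l2 (G × Fin d) →L[ℂ] l2 (G × Fin d)}
  {B : l2 (CentExt G r × Fin d) →L[ℂ] l2 (CentExt G r × Fin d)}

lemma CentExt.comp_liftCLM (hA : ActsAsTwisted σ d T a A) :
    letI := centExtGroup σ r hr hσ hrat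
    (∀ h y i, B h (y, i) = ∑ g ∈ T, ∑ j, a g i j * h ((CentExt.sec g)⁻¹ * y, j)) →
    B ∘L CentExt.liftCLM d = CentExt.liftCLM d ∘L A := by
  intro hB
  ext f ⟨y, i⟩
  rw [comp_apply, comp_apply, hB]
  simp only [CentExt.liftCLM, l2.fiberLift_apply, CentExt.fiberEquiv_apply, hA.2,
    Finset.mul_sum, CentExt.sec_inv_mul_fst hσ hr hrat, CentExt.sec_inv_mul_snd hσ hr hrat]
  refine Finset.sum_congr rfl fun g _ => Finset.sum_congr rfl fun j _ => ?_
  rw [mul_inv, inv_inv]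
  ring

lemma CentExt.averageCLM_comp (hA : ActsAsTwisted σ d T a A) :
    letI := centExtGroup σ r hr hσ hrat
    (∀ h y i, B h (y, i) = ∑ g ∈ T, ∑ j, a g i j * h ((CentExt.sec g)⁻¹ * y, j)) →
    CentExt.averageCLM d ∘L B = A ∘L CentExt.averageCLM d := by
  intro hB
  let := centExtGroup σ r hr hσ hrat
  unfold CentExt.averageCLM
  rw [smul_comp, comp_smul]
  congr 1
  ext h ⟨x, i⟩
  rw [comp_apply, comp_apply, l2.fiberSum_apply, hA.2]
  simp only [CentExt.fiberEquiv_symm_apply, hB, l2.fiberSum_apply, Finset.mul_sum]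
  rw [Finset.sum_comm]
  refine Finset.sum_congr rfl fun g _ => ?_
  rw [Finset.sum_comm]
  refine Finset.sum_congr rfl fun j _ => ?_
  calc ∑ z : {z : ℂ // z ^ r = 1}, (z : ℂ) * (a g i j * h ((CentExt.sec g)⁻¹ * CentExt.mk z x, j))
      = a g i j *
          ∑ z : {z : ℂ // z ^ r = 1}, (z : ℂ) * h ((CentExt.sec g)⁻¹ * CentExt.mk z x, j) := by
        rw [Finset.mul_sum]
        exact Finset.sum_congr rfl fun z _ => mul_left_comm _ _ _
    _ = _ := by
        rw [CentExt.sum_mul_sec_inv_mul hσ hr hrat (fun p => h (p, j)), Finset.mul_sum,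
          Finset.mul_sum]
        exact Finset.sum_congr rfl fun z _ => by ring

end CentralExtension

open scoped Classical in
theorem rational_multiplier_spectral_inclusion_general {G : Type*} [Group G]
    (σ : G → G → ℂ) (hσ : IsMultiplier σ) (r : ℕ) (hr : 0 < r)
    (hrat : ∀ g h, σ g h ^ r = 1)
    (d : ℕ) (T : Finset G) (a : G → Matrix (Fin d) (Fin d) ℂ)
    (A : l2 (G × Fin d) →L[ℂ] l2 (G × Fin d)) (hA : ActsAsTwisted σ d T a A) :
    letI : Group (CentExt G r) := centExtGroup σ r hr hσ hrat
    ∀ (T' : Finset (CentExt G r))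
      (Atil : l2 (CentExt G r × Fin d) →L[ℂ] l2 (CentExt G r × Fin d)),
      ActsAsTwisted (fun _ _ => (1 : ℂ)) d T'
        (fun p => if p.1.1 = 1 then a p.2 else 0) Atil →
      spectrum ℂ A ⊆ spectrum ℂ Atil ∧
      ∀ lam : ℂ, HasL2Eigenvalue A lam → HasL2Eigenvalue Atil lam := by
  intro T' Atil hAtil
  let := rootsOfUnityFintype hr
  let := centExtGroup σ r hr hσ hrat
  have hB := hAtil.untwisted_apply hA.1
  have hV := CentExt.comp_liftCLM hσ hr hrat hA hB
  have hW := CentExt.averageCLM_comp hσ hr hrat hA hB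
  have hWV := CentExt.averageCLM_comp_liftCLM (G := G) hr d
  exact ⟨spectrum_subset_of_intertwining hV hW hWV,
    fun _ => HasL2Eigenvalue.of_intertwining hV (injective_of_comp_eq_id hWV)⟩

open scoped Classical in
/-- **Spectral inclusion for rational multipliers.** Let `σ` be a rational multiplier
(`σ^r = 1`) on `G` with values in a subfield `K` containing the `r`-th roots of unity,
and let `A^σ ∈ M_d(K(G,σ))` act on `l²(G)^d`. Let `Ã = Ψ(A^σ)` be the associated
untwisted matrix over `K·G^σ`, with coefficients `Ã(z,g) = A(g)` if `z = 1` and `0`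
otherwise, acting on `l²(G^σ)^d`. Then `spec(A^σ) ⊆ spec(Ã)` and every eigenvalue of
`A^σ` is an eigenvalue of `Ã`. -/
theorem rational_multiplier_spectral_inclusion {G : Type*} [Group G]
    (σ : G → G → ℂ) (hσ : IsMultiplier σ) (r : ℕ) (hr : 0 < r)
    (hrat : ∀ g h, σ g h ^ r = 1)
    (K : Subfield ℂ) (hK : ∀ z : ℂ, z ^ r = 1 → z ∈ K)
    (d : ℕ) (T : Finset G) (a : G → Matrix (Fin d) (Fin d) ℂ)
    (haK : ∀ g i j, a g i j ∈ K)
    (A : l2 (G × Fin d) →L[ℂ] l2 (G × Fin d)) (hA : ActsAsTwisted σ d T a A) :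
    letI : Group (CentExt G r) := centExtGroup σ r hr hσ hrat
    ∀ (T' : Finset (CentExt G r))
      (Atil : l2 (CentExt G r × Fin d) →L[ℂ] l2 (CentExt G r × Fin d)),
      ActsAsTwisted (fun _ _ => (1 : ℂ)) d T'
        (fun p => if p.1.1 = 1 then a p.2 else 0) Atil →
      spectrum ℂ A ⊆ spectrum ℂ Atil ∧
      ∀ lam : ℂ, HasL2Eigenvalue A lam → HasL2Eigenvalue Atil lam :=
  rational_multiplier_spectral_inclusion_general σ hσ r hr hrat d T a A hA
end
end

section
/- Let Γ be the fundamental group of a closed orientable surface of genus g > 1 and let p : Γ → ℤ^{2g} be the abelianization map. Then every multiplier σ on Γ is cohomologous to a multiplier of the form p*(σ'') for some multiplier σ'' on ℤ^{2g}. Moreover, if σ takes values in 𝒰(ℚ̄), then σ'' can be chosen with values in 𝒰(ℚ̄) such that σ and p*(σ'') are cohomologous via a map s : Γ → 𝒰(ℚ̄) (i.e. they are cohomologous within Z²(Γ, 𝒰(ℚ̄))). -/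
open scoped ComplexConjugate
open scoped commutatorElement

noncomputable section

/-- The surface relator `[a₁,b₁]⋯[a_g,b_g]` in the free group on `2g` generators. -/
def surfaceRel (g : ℕ) : FreeGroup (Fin (2 * g)) :=
  (List.ofFn fun i : Fin g =>
    ⁅FreeGroup.of (⟨2 * i.1, by have := i.2; omega⟩ : Fin (2 * g)),
     FreeGroup.of (⟨2 * i.1 + 1, by have := i.2; omega⟩ : Fin (2 * g))⁆).prod

/-- The fundamental group of the closed orientable surface of genus `g`:
`⟨a₁,b₁,…,a_g,b_g ∣ [a₁,b₁]⋯[a_g,b_g]⟩`. -/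
abbrev SurfaceGroup (g : ℕ) : Type :=
  PresentedGroup ({surfaceRel g} : Set (FreeGroup (Fin (2 * g))))


/-! A multiplier on `Γ` with values in a subgroup `S` of the circle (all of it, or its algebraic
points) is an `S`-valued cocycle, and so defines a central extension `S ×_σ Γ`. Lifting the
generators of `Γ` with trivial scalar part sends the surface relator to a central scalar `a ∈ S`,
and this scalar is the only obstruction to a splitting, i.e. to `σ` being a coboundary.
The bicharacter `(x, y) ↦ a ^ (x₁ y₂)` on `ℤ^{2g}`, where `x₁` is the `a₁`-coordinate of `x` and
`y₂` the `b₁`-coordinate of `y`, pulls back to a cocycle on `Γ` with the same relator value: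
over an abelian group the commutator of two lifts is the antisymmetrization of the cocycle.
Hence `σ` divided by this pullback splits. -/

section Development

variable {G H A B : Type*} [Group G] [Group H]

structure IsCocycle [Monoid A] (c : G → G → A) : Prop where
  mul_mul : ∀ x y z, c y z * c x (y * z) = c (x * y) z * c x y
  one_left : ∀ x, c 1 x = 1
  one_right : ∀ x, c x 1 = 1

def IsCoboundary [CommGroup A] (c : G → G → A) : Prop :=
  ∃ s : G → A, ∀ x y, c x y = s x * s y * (s (x * y))⁻¹

theorem isMultiplier_iff {σ : G → G → ℂ} :
    IsMultiplier σ ↔ (∀ x y, ‖σ x y‖ = 1) ∧ IsCocycle σ :=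
  ⟨fun ⟨h₁, h₂, h₃, h₄⟩ => ⟨h₁, h₂, h₃, h₄⟩, fun ⟨h₁, h₂, h₃, h₄⟩ => ⟨h₁, h₂, h₃, h₄⟩⟩

theorem isCocycle_map_iff [Monoid A] [Monoid B] {c : G → G → A} {f : A →* B}
    (hf : Function.Injective f) :
    IsCocycle (fun x y => f (c x y)) ↔ IsCocycle c := by
  refine ⟨fun h => ⟨fun x y z => hf ?_, fun x => hf ?_, fun x => hf ?_⟩,
    fun h => ⟨fun x y z => ?_, fun x => ?_, fun x => ?_⟩⟩
  · simpa only [map_mul] using h.mul_mul x y z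
  · simpa only [map_one] using h.one_left x
  · simpa only [map_one] using h.one_right x
  · simp only [← map_mul, h.mul_mul]
  · simp only [h.one_left, map_one]
  · simp only [h.one_right, map_one]

namespace IsCocycle

theorem comp [Monoid A] {c : H → H → A} (hc : IsCocycle c) (f : G →* H) :
    IsCocycle (fun x y => c (f x) (f y)) :=
  ⟨fun x y z => by simpa only [map_mul] using hc.mul_mul (f x) (f y) (f z),
    fun x => by simpa only [map_one] using hc.one_left (f x),
    fun x => by simpa only [map_one] using hc.one_right (f x)⟩

theorem div [CommGroup A] {c c' : G → G → A} (hc : IsCocycle c) (hc' : IsCocycle c') :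
    IsCocycle (fun x y => c x y / c' x y) :=
  ⟨fun x y z => by rw [div_mul_div_comm, div_mul_div_comm, hc.mul_mul, hc'.mul_mul],
    fun x => by rw [hc.one_left, hc'.one_left, div_one],
    fun x => by rw [hc.one_right, hc'.one_right, div_one]⟩

end IsCocycle

def bicharacter [CommGroup A] (a : A) (χ₀ χ₁ : G →* Multiplicative ℤ) : G → G → A :=
  fun x y => a ^ ((χ₀ x).toAdd * (χ₁ y).toAdd)

theorem isCocycle_bicharacter [CommGroup A] (a : A) (χ₀ χ₁ : G →* Multiplicative ℤ) :
    IsCocycle (bicharacter a χ₀ χ₁) where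
  mul_mul x y z := by
    simp only [bicharacter, ← zpow_add, map_mul, toAdd_mul]
    ring_nf
  one_left x := by simp [bicharacter]
  one_right x := by simp [bicharacter]

/-- The central extension `1 → A → A ×_c G → G → 1` defined by the cocycle `c`. -/
@[ext]
structure TwistedProd [CommGroup A] {c : G → G → A} (hc : IsCocycle c) where
  fst : A
  snd : G

namespace TwistedProd

variable [CommGroup A] {c : G → G → A} {hc : IsCocycle c}

instance : Mul (TwistedProd hc) := ⟨fun u v => ⟨u.fst * v.fst * c u.snd v.snd, u.snd * v.snd⟩⟩

instance : One (TwistedProd hc) := ⟨⟨1, 1⟩⟩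

instance : Inv (TwistedProd hc) := ⟨fun u => ⟨(u.fst * c u.snd⁻¹ u.snd)⁻¹, u.snd⁻¹⟩⟩

@[simp] theorem fst_mul (u v : TwistedProd hc) : (u * v).fst = u.fst * v.fst * c u.snd v.snd :=
  rfl
@[simp] theorem snd_mul (u v : TwistedProd hc) : (u * v).snd = u.snd * v.snd := rfl
@[simp] theorem fst_one : (1 : TwistedProd hc).fst = 1 := rfl
@[simp] theorem snd_one : (1 : TwistedProd hc).snd = 1 := rfl
@[simp] theorem fst_inv (u : TwistedProd hc) : u⁻¹.fst = (u.fst * c u.snd⁻¹ u.snd)⁻¹ := rfl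
@[simp] theorem snd_inv (u : TwistedProd hc) : u⁻¹.snd = u.snd⁻¹ := rfl

instance : Group (TwistedProd hc) :=
  Group.ofLeftAxioms
    (fun u v w => by
      ext
      · simp only [fst_mul, snd_mul]
        calc u.fst * v.fst * c u.snd v.snd * w.fst * c (u.snd * v.snd) w.snd
            = u.fst * v.fst * w.fst * (c (u.snd * v.snd) w.snd * c u.snd v.snd) := by ac_rfl
          _ = u.fst * (v.fst * w.fst * c v.snd w.snd) * c u.snd (v.snd * w.snd) := by
            rw [← hc.mul_mul]; ac_rfl
      · exact mul_assoc _ _ _)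
    (fun u => by ext <;> simp [hc.one_left])
    (fun u => by ext <;> simp [mul_comm u.fst])

def sndHom : TwistedProd hc →* G where
  toFun := snd
  map_one' := rfl
  map_mul' _ _ := rfl

def inl : A →* TwistedProd hc where
  toFun a := ⟨a, 1⟩
  map_one' := rfl
  map_mul' a b := by ext <;> simp [hc.one_left]

@[simp] theorem fst_inl (a : A) : (inl a : TwistedProd hc).fst = a := rfl

theorem mk_one_mul_mk_one (x y : G) :
    (⟨1, x⟩ * ⟨1, y⟩ : TwistedProd hc) = inl (c x y) * ⟨1, x * y⟩ := by
  ext <;> simp [inl, hc.one_left]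

theorem commutatorElement_mk_one {x y : G} (h : Commute x y) :
    ⁅(⟨1, x⟩ : TwistedProd hc), (⟨1, y⟩ : TwistedProd hc)⁆ = inl (c x y / c y x) := by
  rw [commutatorElement_def, mul_assoc (_ * _), ← mul_inv_rev, mk_one_mul_mk_one,
    mk_one_mul_mk_one, h.eq, map_div, div_eq_mul_inv]
  group

def map (f : G →* H) {c : H → H → A} (hc : IsCocycle c) :
    TwistedProd (hc.comp f) →* TwistedProd hc where
  toFun u := ⟨u.fst, f u.snd⟩
  map_one' := by ext <;> simp
  map_mul' u v := by ext <;> simp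

variable {ι : Type*}

def liftGen (hc : IsCocycle c) (v : ι → G) : FreeGroup ι →* TwistedProd hc :=
  FreeGroup.lift fun i => ⟨1, v i⟩

@[simp] theorem liftGen_of (v : ι → G) (i : ι) : liftGen hc v (.of i) = ⟨1, v i⟩ :=
  FreeGroup.lift_apply_of

theorem snd_liftGen (v : ι → G) (w : FreeGroup ι) :
    (liftGen hc v w).snd = FreeGroup.lift v w := by
  have : sndHom.comp (liftGen hc v) = FreeGroup.lift v :=
    FreeGroup.ext_hom _ _ fun i => by simp [sndHom]
  exact DFunLike.congr_fun this w

theorem map_liftGen (f : H →* G) (v : ι → H) (w : FreeGroup ι) :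
    map f hc (liftGen (hc.comp f) v w) = liftGen hc (f ∘ v) w := by
  have : (map f hc).comp (liftGen (hc.comp f) v) = liftGen hc (f ∘ v) :=
    FreeGroup.ext_hom _ _ fun i => by simp [map]
  exact DFunLike.congr_fun this w

theorem fst_liftGen_of_mul {c₁ c₂ : G → G → A} (hc₁ : IsCocycle c₁) (hc₂ : IsCocycle c₂)
    (h : ∀ x y, c x y = c₁ x y * c₂ x y) (v : ι → G) (w : FreeGroup ι) :
    (liftGen hc v w).fst = (liftGen hc₁ v w).fst * (liftGen hc₂ v w).fst := by
  induction w with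
  | C1 => simp
  | of i => simp
  | inv_of i _ => simp [h, mul_comm]
  | mul w w' ih ih' =>
    simp only [map_mul, fst_mul, snd_liftGen, ih, ih', h]
    ac_rfl

theorem isCoboundary_of_section (ψ : G →* TwistedProd hc) (hψ : ∀ x, (ψ x).snd = x) :
    IsCoboundary c := by
  refine ⟨fun x => (ψ x).fst⁻¹, fun x y => ?_⟩
  have h := congrArg fst (map_mul ψ x y)
  rw [fst_mul, hψ, hψ] at h
  simp only [h, inv_inv, ← mul_inv, inv_mul_cancel_left]

theorem isCoboundary_of_fst_liftGen_eq_one {rels : Set (FreeGroup ι)}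
    {c : PresentedGroup rels → PresentedGroup rels → A} {hc : IsCocycle c}
    (h : ∀ r ∈ rels, (liftGen hc PresentedGroup.of r).fst = 1) : IsCoboundary c := by
  have hlift : FreeGroup.lift PresentedGroup.of = PresentedGroup.mk rels :=
    FreeGroup.ext_hom _ _ fun i => FreeGroup.lift_apply_of
  have hrel : ∀ r ∈ rels, liftGen hc PresentedGroup.of r = 1 := fun r hr => by
    ext
    · exact h r hr
    · rw [snd_liftGen, hlift, PresentedGroup.one_of_mem hr, snd_one]
  let ψ := PresentedGroup.toGroup hrel
  have hψ : sndHom.comp ψ = MonoidHom.id _ :=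
    PresentedGroup.ext fun i => by simp [ψ, sndHom, PresentedGroup.toGroup.of hrel]
  exact isCoboundary_of_section ψ fun x => DFunLike.congr_fun hψ x

end TwistedProd

section SurfaceGroup

variable {g : ℕ}

theorem lift_surfaceRel_eq_one [CommGroup B] (f : Fin (2 * g) → B) :
    FreeGroup.lift f (surfaceRel g) = 1 := by
  rw [surfaceRel, map_list_prod, List.map_ofFn, List.prod_ofFn]
  refine Finset.prod_eq_one fun i _ => ?_
  rw [Function.comp_apply, map_commutatorElement]
  exact commutatorElement_eq_one_iff_commute.2 (.all _ _)

open TwistedProd in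
theorem liftGen_surfaceRel [CommGroup A] [CommGroup B] {c : B → B → A} (hc : IsCocycle c)
    (v : Fin (2 * g) → B) :
    liftGen hc v (surfaceRel g) = inl (∏ i : Fin g,
      c (v ⟨2 * i, by omega⟩) (v ⟨2 * i + 1, by omega⟩) /
        c (v ⟨2 * i + 1, by omega⟩) (v ⟨2 * i, by omega⟩)) := by
  rw [← List.prod_ofFn, map_list_prod, List.map_ofFn, surfaceRel, map_list_prod, List.map_ofFn]
  congr 2
  funext i
  rw [Function.comp_apply, Function.comp_apply, map_commutatorElement, liftGen_of, liftGen_of,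
    commutatorElement_mk_one (.all _ _)]

-- `k : ℕ` rather than `Fin (2 * g)`, so that the coordinates `0` and `1` need no bound on `g`.
def surfaceCoord (g k : ℕ) : Abelianization (SurfaceGroup g) →* Multiplicative ℤ :=
  Abelianization.lift <| PresentedGroup.toGroup
    (f := fun j : Fin (2 * g) => .ofAdd (if (j : ℕ) = k then 1 else 0))
    (by rintro r rfl; exact lift_surfaceRel_eq_one _)

@[simp] theorem toAdd_surfaceCoord_of (k : ℕ) (j : Fin (2 * g)) :
    (surfaceCoord g k (.of (.of j))).toAdd = if (j : ℕ) = k then 1 else 0 := by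
  simp [surfaceCoord, PresentedGroup.toGroup.of]

open TwistedProd in
theorem fst_liftGen_surfaceRel_bicharacter [CommGroup A] (hg : 0 < g) (a : A) :
    (liftGen ((isCocycle_bicharacter a (surfaceCoord g 0) (surfaceCoord g 1)).comp
      Abelianization.of) PresentedGroup.of (surfaceRel g)).fst = a := by
  set hc := isCocycle_bicharacter a (surfaceCoord g 0) (surfaceCoord g 1)
  change (map Abelianization.of hc (liftGen (hc.comp _) PresentedGroup.of (surfaceRel g))).fst = a
  rw [map_liftGen, liftGen_surfaceRel, fst_inl, Finset.prod_eq_single ⟨0, hg⟩]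
  · simp [bicharacter]
  · intro i _ hi
    simp [bicharacter, Fin.ext_iff.not.1 hi]
  · simp

end SurfaceGroup

open TwistedProd in
theorem SurfaceGroup.exists_isCoboundary_div_pullback [CommGroup A] {g : ℕ} (hg : 0 < g)
    {c : SurfaceGroup g → SurfaceGroup g → A} (hc : IsCocycle c) :
    ∃ c'' : Abelianization (SurfaceGroup g) → Abelianization (SurfaceGroup g) → A,
      IsCocycle c'' ∧ IsCoboundary fun x y => c x y / c'' (.of x) (.of y) := by
  set a := (liftGen hc PresentedGroup.of (surfaceRel g)).fst
  have hc'' := isCocycle_bicharacter a (surfaceCoord g 0) (surfaceCoord g 1)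
  have hβ := hc''.comp Abelianization.of
  refine ⟨_, hc'', isCoboundary_of_fst_liftGen_eq_one (hc := hc.div hβ) ?_⟩
  rintro r rfl
  have h := fst_liftGen_of_mul (hc := hc) (hc.div hβ) hβ (fun x y => (div_mul_cancel _ _).symm)
    PresentedGroup.of (surfaceRel g)
  rw [fst_liftGen_surfaceRel_bicharacter hg] at h
  exact mul_eq_right.1 h.symm

def algebraicCircle : Subgroup Circle where
  carrier := {z | IsAlgebraic ℚ (z : ℂ)}
  mul_mem' ha hb := by simpa using ha.mul hb
  one_mem' := by simpa using isAlgebraic_one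
  inv_mem' ha := by simpa using ha.inv

theorem SurfaceGroup.exists_multiplier_pullback {g : ℕ} (hg : 0 < g) (S : Subgroup Circle)
    {σ : SurfaceGroup g → SurfaceGroup g → ℂ} (hσ : IsMultiplier σ)
    (hσS : ∀ x y, ∃ z ∈ S, (z : ℂ) = σ x y) :
    ∃ (σ'' : Abelianization (SurfaceGroup g) → Abelianization (SurfaceGroup g) → ℂ)
      (s : SurfaceGroup g → ℂ), IsMultiplier σ'' ∧ (∀ q q', ∃ z ∈ S, (z : ℂ) = σ'' q q') ∧
      (∀ x, ∃ z ∈ S, (z : ℂ) = s x) ∧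
      ∀ x y, σ x y = s x * s y * conj (s (x * y)) * σ'' (.of x) (.of y) := by
  choose c hcS hc using hσS
  let ι : S →* ℂ := Circle.coeHom.comp S.subtype
  have hι : Function.Injective ι := Circle.coe_injective.comp Subtype.val_injective
  have hσc : σ = fun x y => ι ⟨c x y, hcS x y⟩ := funext₂ fun x y => (hc x y).symm
  obtain ⟨c'', hc'', s, hs⟩ := exists_isCoboundary_div_pullback hg
    ((isCocycle_map_iff hι).1 (hσc ▸ (isMultiplier_iff.1 hσ).2))
  refine ⟨fun q q' => ι (c'' q q'), fun x => ι (s x),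
    isMultiplier_iff.2 ⟨fun _ _ => Circle.norm_coe _, (isCocycle_map_iff hι).2 hc''⟩,
    fun q q' => ⟨_, (c'' q q').2, rfl⟩, fun x => ⟨_, (s x).2, rfl⟩, fun x y => ?_⟩
  rw [hσc]
  dsimp only
  rw [div_eq_iff_eq_mul.1 (hs x y), map_mul, map_mul, map_mul]
  exact congrArg (_ * · * _) (Circle.coe_inv_eq_conj _)

end Development

/-- **Every multiplier on a surface group is cohomologous to one pulled back from the
abelianization.** Let `Γ` be the fundamental group of a closed orientable surface of
genus `g > 1` and `p : Γ → ℤ^{2g}` the abelianization map. Then every multiplier `σ` on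
`Γ` is cohomologous to `p*(σ'')` for some multiplier `σ''` on the abelianization;
moreover, if `σ` takes values in `𝒰(ℚ̄)`, then `σ''` and the cobounding map `s` can be
chosen with values in `𝒰(ℚ̄)`. -/
theorem surface_multiplier_pullback (g : ℕ) (hg : 1 < g)
    (σ : SurfaceGroup g → SurfaceGroup g → ℂ) (hσ : IsMultiplier σ) :
    (∃ (σ'' : Abelianization (SurfaceGroup g) → Abelianization (SurfaceGroup g) → ℂ)
        (s : SurfaceGroup g → ℂ),
      IsMultiplier σ'' ∧ (∀ x, ‖s x‖ = 1) ∧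
      ∀ x y, σ x y = s x * s y * conj (s (x * y)) *
        σ'' (Abelianization.of x) (Abelianization.of y)) ∧
    ((∀ x y, IsAlgebraic ℚ (σ x y)) →
      ∃ (σ'' : Abelianization (SurfaceGroup g) → Abelianization (SurfaceGroup g) → ℂ)
          (s : SurfaceGroup g → ℂ),
        IsMultiplier σ'' ∧ (∀ q q', IsAlgebraic ℚ (σ'' q q')) ∧
        (∀ x, ‖s x‖ = 1 ∧ IsAlgebraic ℚ (s x)) ∧
        ∀ x y, σ x y = s x * s y * conj (s (x * y)) *
          σ'' (Abelianization.of x) (Abelianization.of y)) := by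
  have hg₀ : 0 < g := by omega
  let toCircle (x y : SurfaceGroup g) : Circle := ⟨σ x y, mem_sphere_zero_iff_norm.2 (hσ.1 x y)⟩
  constructor
  · obtain ⟨σ'', s, hσ'', -, hs, h⟩ := SurfaceGroup.exists_multiplier_pullback hg₀ ⊤ hσ
      fun x y => ⟨toCircle x y, trivial, rfl⟩
    refine ⟨σ'', s, hσ'', fun x => ?_, h⟩
    obtain ⟨z, -, hz⟩ := hs x
    exact hz ▸ Circle.norm_coe z
  · intro halg
    obtain ⟨σ'', s, hσ'', hσ''alg, hs, h⟩ := SurfaceGroup.exists_multiplier_pullback hg₀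
      algebraicCircle hσ fun x y => ⟨toCircle x y, halg x y, rfl⟩
    refine ⟨σ'', s, hσ'', fun q q' => ?_, fun x => ?_, h⟩
    · obtain ⟨z, hz, hzq⟩ := hσ''alg q q'
      exact hzq ▸ hz
    · obtain ⟨z, hz, hzx⟩ := hs x
      exact hzx ▸ ⟨Circle.norm_coe z, hz⟩
end
end

section
/- Let a < b be real numbers and let f and f_m (m = 1,2,…) be monotonically increasing right-continuous functions on ℝ that vanish for λ < a and are constant for λ ≥ b. Suppose that for every polynomial p, lim_{m→∞} ∫ p df_m = ∫ p df, where the integrals are Lebesgue–Stieltjes integrals. Define f̲(λ) = liminf_m f_m(λ), f̄(λ) = limsup_m f_m(λ), f̲⁺(λ) = lim_{ε→0⁺} f̲(λ+ε) and f̄⁺(λ) = lim_{ε→0⁺} f̄(λ+ε). Then f(λ) = f̲⁺(λ) = f̄⁺(λ) for all λ ∈ ℝ. In particular, f(λ) = lim_{m→∞} f_m(λ) at every point λ of continuity of f, hence at all but countably many λ. -/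
/-!
All the measures live on `[a, b]`, so Weierstrass approximation upgrades convergence of the
polynomial moments to convergence of `∫ r dF_m` for every bounded continuous `r`. Squeezing such
an `r` between the indicators of `(-∞, x]` and `(-∞, y]` for `x < y` gives
`limsup F_m(x) ≤ f(y)` and `f(x) ≤ liminf F_m(y)`; by right continuity of `f` the first becomes
`limsup F_m(x) ≤ f(x)`, and all claims follow by squeezing.
-/

open Filter MeasureTheory Set Topology Polynomial BoundedContinuousFunction

theorem tendsto_of_forall_eventually_dist_le {ι : Type*} {l : Filter ι} {u : ι → ℝ} {c : ℝ}
    (h : ∀ ε > 0, ∃ v : ι → ℝ, ∃ d, Tendsto v l (𝓝 d) ∧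
      (∀ᶠ i in l, dist (u i) (v i) ≤ ε) ∧ dist c d ≤ ε) :
    Tendsto u l (𝓝 c) := by
  refine Metric.tendsto_nhds.2 fun ε hε => ?_
  obtain ⟨v, d, hv, huv, hcd⟩ := h (ε / 4) (by positivity)
  filter_upwards [huv, Metric.tendsto_nhds.1 hv (ε / 4) (by positivity)] with i hui hvi
  calc dist (u i) c ≤ dist (u i) (v i) + dist (v i) d + dist d c := dist_triangle4 _ _ _ _
    _ < ε := by rw [dist_comm d]; linarith

theorem dist_integral_le_of_ae_dist_le {α E : Type*} [MeasurableSpace α] [NormedAddCommGroup E]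
    [NormedSpace ℝ E] {μ : Measure α} [IsFiniteMeasure μ] {f g : α → E} {δ : ℝ}
    (hf : Integrable f μ) (hg : Integrable g μ) (h : ∀ᵐ x ∂μ, dist (f x) (g x) ≤ δ) :
    dist (∫ x, f x ∂μ) (∫ x, g x ∂μ) ≤ δ * μ.real univ := by
  rw [dist_eq_norm, ← integral_sub hf hg]
  exact norm_integral_le_of_norm_le_const (by simpa only [dist_eq_norm] using h)

theorem ContinuousOn.integrable_of_ae_mem {X E : Type*} [MeasurableSpace X]
    [TopologicalSpace X] [OpensMeasurableSpace X] [T2Space X] [NormedAddCommGroup E]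
    {μ : Measure X} [IsFiniteMeasureOnCompacts μ] {K : Set X} {g : X → E}
    (hg : ContinuousOn g K) (hK : IsCompact K) (hμ : ∀ᵐ x ∂μ, x ∈ K) :
    Integrable g μ := by
  simpa only [IntegrableOn, Measure.restrict_eq_self_of_ae_mem hμ] using
    hg.integrableOn_compact (μ := μ) hK

theorem tendsto_integral_of_tendsto_integral_eval {ι : Type*} {l : Filter ι} {a b : ℝ}
    {μ : ι → Measure ℝ} {ν : Measure ℝ} [∀ i, IsFiniteMeasure (μ i)]
    [IsFiniteMeasure ν]
    (hμ : ∀ i, ∀ᵐ x ∂μ i, x ∈ Icc a b) (hν : ∀ᵐ x ∂ν, x ∈ Icc a b)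
    (hpoly : ∀ P : ℝ[X],
      Tendsto (fun i => ∫ x, P.eval x ∂μ i) l (𝓝 (∫ x, P.eval x ∂ν)))
    {g : ℝ → ℝ} (hg : ContinuousOn g (Icc a b)) :
    Tendsto (fun i => ∫ x, g x ∂μ i) l (𝓝 (∫ x, g x ∂ν)) := by
  -- The masses converge (`P = 1`), so they are eventually below `K`, which makes the
  -- Weierstrass error `ε / K` per unit of mass uniform in `i`.
  have hmass : Tendsto (fun i => (μ i).real univ) l (𝓝 (ν.real univ)) := by
    simpa using hpoly 1
  refine tendsto_of_forall_eventually_dist_le fun ε hε => ?_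
  set K := ν.real univ + 1
  have hK : 0 < K := by positivity
  obtain ⟨P, hP⟩ := exists_polynomial_near_of_continuousOn a b g hg (ε / K) (by positivity)
  have happrox (ρ : Measure ℝ) [IsFiniteMeasure ρ] (hρ : ∀ᵐ x ∂ρ, x ∈ Icc a b) :
      dist (∫ x, g x ∂ρ) (∫ x, P.eval x ∂ρ) ≤ ε / K * ρ.real univ :=
    dist_integral_le_of_ae_dist_le (hg.integrable_of_ae_mem isCompact_Icc hρ)
      (P.continuous.continuousOn.integrable_of_ae_mem isCompact_Icc hρ)
      (hρ.mono fun x hx => by rw [dist_comm, Real.dist_eq]; exact (hP x hx).le)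
  refine ⟨_, _, hpoly P, ?_, ?_⟩
  · filter_upwards [hmass.eventually (gt_mem_nhds (lt_add_one _))] with i hi
    calc _ ≤ ε / K * (μ i).real univ := happrox _ (hμ i)
      _ ≤ ε / K * K := by gcongr
      _ = ε := div_mul_cancel₀ _ hK.ne'
  · calc _ ≤ ε / K * ν.real univ := happrox _ hν
      _ ≤ ε / K * K := by gcongr; linarith
      _ = ε := div_mul_cancel₀ _ hK.ne'

theorem exists_indicator_Iic_le_le_indicator_Iic {x y : ℝ} (hxy : x < y) :
    ∃ r : ℝ →ᵇ ℝ, (Iic x).indicator 1 ≤ ⇑r ∧ ⇑r ≤ (Iic y).indicator 1 := by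
  obtain ⟨r, hr0, hr1, hr⟩ := exists_bounded_zero_one_of_closed isClosed_Ici isClosed_Iic
    (Ici_disjoint_Iic.2 hxy.not_ge)
  refine ⟨r, fun t => ?_, fun t => ?_⟩
  · by_cases ht : t ≤ x
    · simp [ht, hr1 ht]
    · simp [ht, (hr t).1]
  · by_cases ht : t ≤ y
    · simp [ht, (hr t).2]
    · simp [ht, hr0 (le_of_not_ge ht)]

namespace StieltjesFunction

variable {g : StieltjesFunction ℝ} {a b : ℝ}

theorem tendsto_atBot_of_eq_zero (hga : ∀ x < a, g x = 0) : Tendsto g atBot (𝓝 0) :=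
  tendsto_const_nhds.congr' <| (eventually_lt_atBot a).mono fun x hx => (hga x hx).symm

theorem tendsto_atTop_of_eq (hgb : ∀ x, b ≤ x → g x = g b) : Tendsto g atTop (𝓝 (g b)) :=
  tendsto_const_nhds.congr' <| (eventually_ge_atTop b).mono fun x hx => (hgb x hx).symm

theorem ae_mem_Icc (hga : ∀ x < a, g x = 0) (hgb : ∀ x, b ≤ x → g x = g b) :
    ∀ᵐ x ∂g.measure, x ∈ Icc a b := by
  have hleft : Function.leftLim g a = 0 :=
    leftLim_eq_of_tendsto <| tendsto_const_nhds.congr' <|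
      eventually_nhdsWithin_of_forall fun x hx => (hga x hx).symm
  have hge : ∀ᵐ x ∂g.measure, a ≤ x := by
    simp only [ae_iff, not_le]
    show g.measure (Iio a) = 0
    simp [g.measure_Iio (tendsto_atBot_of_eq_zero hga), hleft]
  have hle : ∀ᵐ x ∂g.measure, x ≤ b := by
    simp only [ae_iff, not_le]
    show g.measure (Ioi b) = 0
    simp [g.measure_Ioi (tendsto_atTop_of_eq hgb)]
  filter_upwards [hge, hle] with x h₁ h₂ using ⟨h₁, h₂⟩

theorem measureReal_Iic (hg : Tendsto g atBot (𝓝 0)) (x : ℝ) :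
    g.measure.real (Iic x) = g x := by
  rw [measureReal_def, g.measure_Iic hg, sub_zero,
    ENNReal.toReal_ofReal (g.mono.le_of_tendsto hg x)]

theorem apply_le_integral [IsFiniteMeasure g.measure] (hg : Tendsto g atBot (𝓝 0)) {x : ℝ}
    {r : ℝ →ᵇ ℝ} (hr : (Iic x).indicator 1 ≤ ⇑r) : g x ≤ ∫ t, r t ∂g.measure := by
  rw [← g.measureReal_Iic hg, ← integral_indicator_one measurableSet_Iic]
  exact integral_mono ((integrable_const (1 : ℝ)).indicator measurableSet_Iic)
    (r.integrable _) hr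

theorem integral_le_apply [IsFiniteMeasure g.measure] (hg : Tendsto g atBot (𝓝 0)) {y : ℝ}
    {r : ℝ →ᵇ ℝ} (hr : ⇑r ≤ (Iic y).indicator 1) : ∫ t, r t ∂g.measure ≤ g y := by
  rw [← g.measureReal_Iic hg, ← integral_indicator_one measurableSet_Iic]
  exact integral_mono (r.integrable _)
    ((integrable_const (1 : ℝ)).indicator measurableSet_Iic) hr

theorem tendsto_apply_add_nhdsGT (g : StieltjesFunction ℝ) (x : ℝ) :
    Tendsto (fun ε => g (x + ε)) (𝓝[>] 0) (𝓝 (g x)) := by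
  simpa [Function.comp_def] using ((g.right_continuous x).comp_of_eq
    (continuous_const_add x).continuousWithinAt
    (fun ε (hε : ε ∈ Ioi 0) => by simpa using le_of_lt hε) (add_zero x)).tendsto

section WeakConvergence

variable {ι : Type*} {l : Filter ι} {F : ι → StieltjesFunction ℝ} {f : StieltjesFunction ℝ}

theorem isBoundedUnder_ge_apply (hF : ∀ i, Tendsto (F i) atBot (𝓝 0)) (x : ℝ) :
    IsBoundedUnder (· ≥ ·) l fun i => F i x :=
  isBoundedUnder_of ⟨0, fun i => (F i).mono.le_of_tendsto (hF i) x⟩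

theorem isBoundedUnder_le_apply [∀ i, IsFiniteMeasure (F i).measure]
    (hF : ∀ i, Tendsto (F i) atBot (𝓝 0))
    (hint : ∀ r : ℝ →ᵇ ℝ,
      Tendsto (fun i => ∫ t, r t ∂(F i).measure) l (𝓝 (∫ t, r t ∂f.measure)))
    (x : ℝ) : IsBoundedUnder (· ≤ ·) l fun i => F i x :=
  (hint 1).isBoundedUnder_le.mono_le <| Eventually.of_forall fun i =>
    (F i).apply_le_integral (hF i) (indicator_le_self' fun _ _ => zero_le_one)

theorem liminf_apply_le_limsup_apply [l.NeBot] [∀ i, IsFiniteMeasure (F i).measure]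
    (hF : ∀ i, Tendsto (F i) atBot (𝓝 0))
    (hint : ∀ r : ℝ →ᵇ ℝ,
      Tendsto (fun i => ∫ t, r t ∂(F i).measure) l (𝓝 (∫ t, r t ∂f.measure)))
    (x : ℝ) : liminf (fun i => F i x) l ≤ limsup (fun i => F i x) l :=
  liminf_le_limsup (isBoundedUnder_le_apply hF hint x) (isBoundedUnder_ge_apply hF x)

theorem limsup_apply_le_of_lt [l.NeBot] [∀ i, IsFiniteMeasure (F i).measure]
    [IsFiniteMeasure f.measure] (hF : ∀ i, Tendsto (F i) atBot (𝓝 0))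
    (hf : Tendsto f atBot (𝓝 0))
    (hint : ∀ r : ℝ →ᵇ ℝ,
      Tendsto (fun i => ∫ t, r t ∂(F i).measure) l (𝓝 (∫ t, r t ∂f.measure)))
    {x y : ℝ} (hxy : x < y) : limsup (fun i => F i x) l ≤ f y := by
  obtain ⟨r, hxr, hry⟩ := exists_indicator_Iic_le_le_indicator_Iic hxy
  calc limsup (fun i => F i x) l ≤ limsup (fun i => ∫ t, r t ∂(F i).measure) l :=
        limsup_le_limsup (Eventually.of_forall fun i => (F i).apply_le_integral (hF i) hxr)
          (isBoundedUnder_ge_apply hF x).isCoboundedUnder_le (hint r).isBoundedUnder_le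
    _ = ∫ t, r t ∂f.measure := (hint r).limsup_eq
    _ ≤ f y := f.integral_le_apply hf hry

theorem le_liminf_apply_of_lt [l.NeBot] [∀ i, IsFiniteMeasure (F i).measure]
    [IsFiniteMeasure f.measure] (hF : ∀ i, Tendsto (F i) atBot (𝓝 0))
    (hf : Tendsto f atBot (𝓝 0))
    (hint : ∀ r : ℝ →ᵇ ℝ,
      Tendsto (fun i => ∫ t, r t ∂(F i).measure) l (𝓝 (∫ t, r t ∂f.measure)))
    {x y : ℝ} (hxy : x < y) : f x ≤ liminf (fun i => F i y) l := by
  obtain ⟨r, hxr, hry⟩ := exists_indicator_Iic_le_le_indicator_Iic hxy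
  calc f x ≤ ∫ t, r t ∂f.measure := f.apply_le_integral hf hxr
    _ = liminf (fun i => ∫ t, r t ∂(F i).measure) l := (hint r).liminf_eq.symm
    _ ≤ liminf (fun i => F i y) l :=
        liminf_le_liminf (Eventually.of_forall fun i => (F i).integral_le_apply (hF i) hry)
          (hint r).isBoundedUnder_ge (isBoundedUnder_le_apply hF hint y).isCoboundedUnder_ge

theorem limsup_apply_le [l.NeBot] [∀ i, IsFiniteMeasure (F i).measure]
    [IsFiniteMeasure f.measure] (hF : ∀ i, Tendsto (F i) atBot (𝓝 0))
    (hf : Tendsto f atBot (𝓝 0))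
    (hint : ∀ r : ℝ →ᵇ ℝ,
      Tendsto (fun i => ∫ t, r t ∂(F i).measure) l (𝓝 (∫ t, r t ∂f.measure)))
    (x : ℝ) : limsup (fun i => F i x) l ≤ f x :=
  ge_of_tendsto ((f.right_continuous x).mono Ioi_subset_Ici_self).tendsto <|
    eventually_nhdsWithin_of_forall fun _ hy => limsup_apply_le_of_lt hF hf hint hy

theorem tendsto_liminf_apply_add [l.NeBot] [∀ i, IsFiniteMeasure (F i).measure]
    [IsFiniteMeasure f.measure] (hF : ∀ i, Tendsto (F i) atBot (𝓝 0))
    (hf : Tendsto f atBot (𝓝 0))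
    (hint : ∀ r : ℝ →ᵇ ℝ,
      Tendsto (fun i => ∫ t, r t ∂(F i).measure) l (𝓝 (∫ t, r t ∂f.measure)))
    (x : ℝ) :
    Tendsto (fun ε => liminf (fun i => F i (x + ε)) l) (𝓝[>] 0) (𝓝 (f x)) :=
  tendsto_of_tendsto_of_tendsto_of_le_of_le' tendsto_const_nhds (f.tendsto_apply_add_nhdsGT x)
    (eventually_nhdsWithin_of_forall fun _ hε => le_liminf_apply_of_lt hF hf hint
      (lt_add_of_pos_right x hε))
    (Eventually.of_forall fun _ =>
      (liminf_apply_le_limsup_apply hF hint _).trans (limsup_apply_le hF hf hint _))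

theorem tendsto_limsup_apply_add [l.NeBot] [∀ i, IsFiniteMeasure (F i).measure]
    [IsFiniteMeasure f.measure] (hF : ∀ i, Tendsto (F i) atBot (𝓝 0))
    (hf : Tendsto f atBot (𝓝 0))
    (hint : ∀ r : ℝ →ᵇ ℝ,
      Tendsto (fun i => ∫ t, r t ∂(F i).measure) l (𝓝 (∫ t, r t ∂f.measure)))
    (x : ℝ) :
    Tendsto (fun ε => limsup (fun i => F i (x + ε)) l) (𝓝[>] 0) (𝓝 (f x)) :=
  tendsto_of_tendsto_of_tendsto_of_le_of_le' tendsto_const_nhds (f.tendsto_apply_add_nhdsGT x)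
    (eventually_nhdsWithin_of_forall fun _ hε =>
      (le_liminf_apply_of_lt hF hf hint (lt_add_of_pos_right x hε)).trans
        (liminf_apply_le_limsup_apply hF hint _))
    (Eventually.of_forall fun _ => limsup_apply_le hF hf hint _)

theorem tendsto_apply_of_continuousAt [l.NeBot] [∀ i, IsFiniteMeasure (F i).measure]
    [IsFiniteMeasure f.measure] (hF : ∀ i, Tendsto (F i) atBot (𝓝 0))
    (hf : Tendsto f atBot (𝓝 0))
    (hint : ∀ r : ℝ →ᵇ ℝ,
      Tendsto (fun i => ∫ t, r t ∂(F i).measure) l (𝓝 (∫ t, r t ∂f.measure)))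
    {x : ℝ} (hx : ContinuousAt f x) : Tendsto (fun i => F i x) l (𝓝 (f x)) :=
  tendsto_of_le_liminf_of_limsup_le
    (le_of_tendsto (hx.continuousWithinAt (s := Iio x)).tendsto <|
      eventually_nhdsWithin_of_forall fun _ hy => le_liminf_apply_of_lt hF hf hint hy)
    (limsup_apply_le hF hf hint x) (isBoundedUnder_le_apply hF hint x)
    (isBoundedUnder_ge_apply hF x)

end WeakConvergence

end StieltjesFunction

open StieltjesFunction in
theorem weak_spectral_convergence_general (a b : ℝ)
    (f : StieltjesFunction ℝ) (F : ℕ → StieltjesFunction ℝ)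
    (hfa : ∀ x : ℝ, x < a → f x = 0) (hfb : ∀ x : ℝ, b ≤ x → f x = f b)
    (hFa : ∀ (m : ℕ) (x : ℝ), x < a → F m x = 0)
    (hFb : ∀ (m : ℕ) (x : ℝ), b ≤ x → F m x = F m b)
    (hpoly : ∀ P : Polynomial ℝ,
      Tendsto (fun m => ∫ x, P.eval x ∂(F m).measure) atTop
        (nhds (∫ x, P.eval x ∂f.measure))) :
    (∀ lam : ℝ,
      Tendsto (fun ε : ℝ => liminf (fun m => F m (lam + ε)) atTop)
        (nhdsWithin 0 (Set.Ioi 0)) (nhds (f lam)) ∧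
      Tendsto (fun ε : ℝ => limsup (fun m => F m (lam + ε)) atTop)
        (nhdsWithin 0 (Set.Ioi 0)) (nhds (f lam))) ∧
    (∀ lam : ℝ, ContinuousAt (fun x => f x) lam →
      Tendsto (fun m => F m lam) atTop (nhds (f lam))) ∧
    {lam : ℝ | ¬ ContinuousAt (fun x => f x) lam}.Countable := by
  have hf := tendsto_atBot_of_eq_zero hfa
  have hF (m : ℕ) := tendsto_atBot_of_eq_zero (hFa m)
  have : IsFiniteMeasure f.measure := f.isFiniteMeasure hf (tendsto_atTop_of_eq hfb)
  have (m : ℕ) : IsFiniteMeasure (F m).measure :=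
    (F m).isFiniteMeasure (hF m) (tendsto_atTop_of_eq (hFb m))
  have hint (r : ℝ →ᵇ ℝ) :
      Tendsto (fun m => ∫ t, r t ∂(F m).measure) atTop (𝓝 (∫ t, r t ∂f.measure)) :=
    tendsto_integral_of_tendsto_integral_eval (fun m => ae_mem_Icc (hFa m) (hFb m))
      (ae_mem_Icc hfa hfb) hpoly r.continuous.continuousOn
  exact ⟨fun lam => ⟨tendsto_liminf_apply_add hF hf hint lam,
      tendsto_limsup_apply_add hF hf hint lam⟩,
    fun _ hlam => tendsto_apply_of_continuousAt hF hf hint hlam,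
    f.mono.countable_not_continuousAt⟩

/-- **Weak spectral convergence from convergence of polynomial moments.** Let `f` and
`f_m` be monotone increasing right-continuous functions (Stieltjes functions) vanishing
on `(−∞,a)` and constant on `[b,∞)`, and suppose `∫ p df_m → ∫ p df` for every
polynomial `p` (Lebesgue–Stieltjes integrals). Then `f(λ) = f̲⁺(λ) = f̄⁺(λ)` for every
`λ` (the right limits at `λ` of `liminf_m f_m` and `limsup_m f_m` both exist and equal
`f(λ)`); in particular `f_m(λ) → f(λ)` at every continuity point of `f`, hence at all
but countably many `λ`. -/
theorem weak_spectral_convergence (a b : ℝ) (hab : a < b)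
    (f : StieltjesFunction ℝ) (F : ℕ → StieltjesFunction ℝ)
    (hfa : ∀ x : ℝ, x < a → f x = 0) (hfb : ∀ x : ℝ, b ≤ x → f x = f b)
    (hFa : ∀ (m : ℕ) (x : ℝ), x < a → F m x = 0)
    (hFb : ∀ (m : ℕ) (x : ℝ), b ≤ x → F m x = F m b)
    (hpoly : ∀ P : Polynomial ℝ,
      Tendsto (fun m => ∫ x, P.eval x ∂(F m).measure) atTop
        (nhds (∫ x, P.eval x ∂f.measure))) :
    (∀ lam : ℝ,
      Tendsto (fun ε : ℝ => liminf (fun m => F m (lam + ε)) atTop)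
        (nhdsWithin 0 (Set.Ioi 0)) (nhds (f lam)) ∧
      Tendsto (fun ε : ℝ => limsup (fun m => F m (lam + ε)) atTop)
        (nhdsWithin 0 (Set.Ioi 0)) (nhds (f lam))) ∧
    (∀ lam : ℝ, ContinuousAt (fun x => f x) lam →
      Tendsto (fun m => F m lam) atTop (nhds (f lam))) ∧
    {lam : ℝ | ¬ ContinuousAt (fun x => f x) lam}.Countable :=
  weak_spectral_convergence_general a b f F hfa hfb hFa hFb hpoly
end

section
/- The class 𝒦 is closed under taking extensions with cyclic kernel: if 1 → A → G → H → 1 is a short exact sequence of groups with A cyclic and H ∈ 𝒦, then G ∈ 𝒦. -/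
open scoped ComplexConjugate

noncomputable section

/-- A discrete group is amenable if there is a left-invariant mean on `l∞(G)`
(realized as the bounded functions `G →ᵇ ℝ` for the discrete topology). -/
def Amenable (G : Type*) [Group G] : Prop :=
  letI : TopologicalSpace G := ⊥
  haveI : DiscreteTopology G := ⟨rfl⟩
  ∃ m : BoundedContinuousFunction G ℝ →ₗ[ℝ] ℝ,
    (∀ f : BoundedContinuousFunction G ℝ, (∀ x, 0 ≤ f x) → 0 ≤ m f) ∧
    m (BoundedContinuousFunction.const G 1) = 1 ∧
    ∀ (g : G) (f : BoundedContinuousFunction G ℝ),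
      m (f.compContinuous ⟨fun x => g * x, continuous_of_discreteTopology⟩) = m f

universe u

/-- The class `𝒦`: the smallest class of groups containing all free groups and all
amenable groups, closed under directed unions and extensions with amenable quotient
(and under isomorphism). -/
inductive InClassK : ∀ (G : Type u) [Group G], Prop where
  | free : ∀ (G : Type u) [Group G], IsFreeGroup G → InClassK G
  | amenable : ∀ (G : Type u) [Group G], Amenable G → InClassK G
  | directedUnion : ∀ (G : Type u) [Group G] (S : Set (Subgroup G)),
      DirectedOn (· ≤ ·) S → sSup S = ⊤ →
      (∀ H ∈ S, InClassK ↥H) → InClassK G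
  | extension : ∀ (G : Type u) [Group G] (N : Subgroup G) [N.Normal],
      InClassK ↥N → Amenable (G ⧸ N) → InClassK G
  | iso : ∀ (G H : Type u) [Group G] [Group H], G ≃* H → InClassK G → InClassK H

/-!
Induct on the construction of `G ⧸ N ∈ 𝒦`, carrying along an arbitrary surjection onto it with
cyclic kernel. Preimages of subgroups again have cyclic kernel, so the directed-union, extension
and isomorphism steps are formal, and the amenable step only needs that cyclic groups are amenable
(for `ℤ`, take an ultrafilter limit of Cesàro means).

The free step carries the content. Conjugation embeds `G/C` into the finite group `Aut(N)`, where
`C` is the centralizer of `N`. The image of `C` in the free group `G ⧸ N` is free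
(Nielsen–Schreier), so `C` maps onto it with a splitting, and since the kernel `N ∩ C` is central
in `C`, the image `K` of the splitting is a free normal subgroup of `C` with `C/K` cyclic.
Hence `C ∈ 𝒦`, and `G ∈ 𝒦` because `G/C` is finite.
-/

open Filter Topology

def cesaroMean (f : ℤ → ℝ) (n : ℕ) : ℝ := (∑ k ∈ Finset.range (n + 1), f k) / (n + 1)

section Cesaro

variable {f : ℤ → ℝ} {C : ℝ}

lemma abs_cesaroMean_le (hf : ∀ k, |f k| ≤ C) (n : ℕ) : |cesaroMean f n| ≤ C := by
  have hn : (0 : ℝ) < n + 1 := by positivity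
  rw [cesaroMean, abs_div, abs_of_pos hn, div_le_iff₀ hn]
  calc |∑ k ∈ Finset.range (n + 1), f k| ≤ ∑ k ∈ Finset.range (n + 1), |f k| :=
        Finset.abs_sum_le_sum_abs _ _
    _ ≤ ∑ _k ∈ Finset.range (n + 1), C := Finset.sum_le_sum fun k _ => hf k
    _ = C * (n + 1) := by simp [mul_comm]

lemma tendsto_cesaroMean_comp_add_nat_sub (hf : ∀ k, |f k| ≤ C) (m : ℕ) :
    Tendsto (fun n => cesaroMean (fun k => f (m + k)) n - cesaroMean f n) atTop (𝓝 0) := by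
  -- both sums are partial sums over `range (m + n + 1)`, cut at different places
  have htel : ∀ n : ℕ, cesaroMean (fun k => f (m + k)) n - cesaroMean f n =
      ((∑ i ∈ Finset.range m, f (n + 1 + i)) - ∑ i ∈ Finset.range m, f i) / (n + 1) := by
    intro n
    have h₁ := Finset.sum_range_add (fun k : ℕ => f k) m (n + 1)
    have h₂ := Finset.sum_range_add (fun k : ℕ => f k) (n + 1) m
    rw [add_comm m, h₂] at h₁
    push_cast at h₁
    rw [cesaroMean, cesaroMean, ← sub_div]
    congr 1
    linarith
  have hbound : ∀ n : ℕ, ‖cesaroMean (fun k => f (m + k)) n - cesaroMean f n‖ ≤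
      2 * m * C * (1 / (n + 1)) := by
    intro n
    have hsum : ∀ g : ℕ → ℤ, |∑ i ∈ Finset.range m, f (g i)| ≤ m * C := fun g =>
      (Finset.abs_sum_le_sum_abs _ _).trans <| by
        simpa using Finset.sum_le_sum fun i (_ : i ∈ Finset.range m) => hf (g i)
    rw [htel, Real.norm_eq_abs, abs_div, abs_of_pos (by positivity : (0 : ℝ) < n + 1),
      ← mul_one_div]
    gcongr
    linarith [abs_sub _ _ |>.trans (add_le_add (hsum fun i => n + 1 + i) (hsum Nat.cast))]
  refine squeeze_zero_norm hbound ?_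
  simpa using tendsto_one_div_add_atTop_nhds_zero_nat.const_mul (2 * m * C)

lemma tendsto_cesaroMean_comp_add_sub (hf : ∀ k, |f k| ≤ C) (m : ℤ) :
    Tendsto (fun n => cesaroMean (fun k => f (m + k)) n - cesaroMean f n) atTop (𝓝 0) := by
  obtain ⟨m, rfl | rfl⟩ := Int.eq_nat_or_neg m
  · exact tendsto_cesaroMean_comp_add_nat_sub hf m
  · simpa using (tendsto_cesaroMean_comp_add_nat_sub (f := fun k => f (-m + k))
      (fun k => hf _) m).neg

end Cesaro

lemma tendsto_limUnder_of_abs_le {α : Type*} {l : Ultrafilter α} {u : α → ℝ} {C : ℝ}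
    (hu : ∀ a, |u a| ≤ C) : Tendsto u l (𝓝 (limUnder (l : Filter α) u)) := by
  obtain ⟨x, -, hx⟩ := isCompact_Icc.ultrafilter_le_nhds (l.map u)
    (le_principal_iff.2 (mem_map.2 (univ_mem' fun a => abs_le.1 (hu a))))
  exact tendsto_nhds_limUnder ⟨x, hx⟩

lemma amenable_multiplicative_int : Amenable (Multiplicative ℤ) := by
  let : TopologicalSpace (Multiplicative ℤ) := ⊥
  have : DiscreteTopology (Multiplicative ℤ) := ⟨rfl⟩
  let U := hyperfilter ℕ
  let avg (f : BoundedContinuousFunction (Multiplicative ℤ) ℝ) : ℕ → ℝ :=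
    cesaroMean fun k => f (.ofAdd k)
  have hbdd (f : BoundedContinuousFunction (Multiplicative ℤ) ℝ) (k : ℤ) : |f (.ofAdd k)| ≤ ‖f‖ :=
    f.norm_coe_le_norm _
  have hlim (f) : Tendsto (avg f) U (𝓝 (limUnder (U : Filter ℕ) (avg f))) :=
    tendsto_limUnder_of_abs_le (abs_cesaroMean_le (hbdd f))
  refine ⟨{ toFun := fun f => limUnder (U : Filter ℕ) (avg f)
            map_add' := fun f g => ?_
            map_smul' := fun c f => ?_ }, fun f hf => ?_, ?_, fun g f => ?_⟩
  · refine tendsto_nhds_unique (hlim (f + g)) (((hlim f).add (hlim g)).congr fun n => ?_)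
    simp [avg, cesaroMean, Finset.sum_add_distrib, add_div]
  · refine tendsto_nhds_unique (hlim (c • f)) (((hlim f).const_mul c).congr fun n => ?_)
    simp [avg, cesaroMean, ← Finset.mul_sum, mul_div_assoc]
  · exact ge_of_tendsto' (hlim f) fun n =>
      div_nonneg (Finset.sum_nonneg fun k _ => hf _) (by positivity)
  · refine tendsto_nhds_unique (hlim _) (tendsto_const_nhds.congr fun n => ?_)
    simp [avg, cesaroMean]
    field_simp
  · have hU : (U : Filter ℕ) ≤ atTop := hyperfilter_le_cofinite.trans Nat.cofinite_eq_atTop.le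
    refine tendsto_nhds_unique (hlim _) ?_
    simpa [avg] using (hlim f).add
      ((tendsto_cesaroMean_comp_add_sub (hbdd f) g.toAdd).mono_left hU)

lemma Amenable.of_surjective {G H : Type*} [Group G] [Group H] (hG : Amenable G) (π : G →* H)
    (hπ : Function.Surjective π) : Amenable H := by
  let : TopologicalSpace G := ⊥
  have : DiscreteTopology G := ⟨rfl⟩
  let : TopologicalSpace H := ⊥
  have : DiscreteTopology H := ⟨rfl⟩
  obtain ⟨m, hpos, hone, hinv⟩ := hG
  let pull : BoundedContinuousFunction H ℝ →ₗ[ℝ] BoundedContinuousFunction G ℝ :=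
    { toFun := fun f => f.compContinuous ⟨π, continuous_of_discreteTopology⟩
      map_add' := fun _ _ => rfl
      map_smul' := fun _ _ => rfl }
  refine ⟨m ∘ₗ pull, fun f hf => hpos _ fun x => hf _, hone, fun h f => ?_⟩
  obtain ⟨g, rfl⟩ := hπ h
  have hcomm : pull (f.compContinuous ⟨fun x => π g * x, continuous_of_discreteTopology⟩) =
      (pull f).compContinuous ⟨fun x => g * x, continuous_of_discreteTopology⟩ := by
    ext x
    exact congrArg f (map_mul π g x).symm
  simp only [LinearMap.comp_apply, hcomm, hinv]

lemma Amenable.of_finite (G : Type*) [Group G] [Finite G] : Amenable G := by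
  let : TopologicalSpace G := ⊥
  have : DiscreteTopology G := ⟨rfl⟩
  have := Fintype.ofFinite G
  refine ⟨{ toFun := fun f => (∑ x, f x) / Fintype.card G
            map_add' := fun f g => ?_
            map_smul' := fun c f => ?_ }, fun f hf => ?_, ?_, fun g f => ?_⟩
  · simp [Finset.sum_add_distrib, add_div]
  · simp [← Finset.mul_sum, mul_div_assoc]
  · exact div_nonneg (Finset.sum_nonneg fun x _ => hf x) (Nat.cast_nonneg _)
  · simp
  · exact congrArg (· / (Fintype.card G : ℝ))
      (Fintype.sum_equiv (Equiv.mulLeft g) _ _ fun _ => rfl)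

lemma Amenable.of_isCyclic {G : Type*} [Group G] (hG : IsCyclic G) : Amenable G := by
  obtain ⟨g, hg⟩ := hG.exists_generator
  refine amenable_multiplicative_int.of_surjective (zpowersHom G g) fun x => ?_
  obtain ⟨k, hk⟩ := Subgroup.mem_zpowers_iff.mp (hg x)
  exact ⟨.ofAdd k, hk⟩

lemma IsFreeGroup.exists_rightInverse {F H : Type*} [Group F] [IsFreeGroup F] [Group H]
    (π : H →* F) (hπ : Function.Surjective π) : ∃ s : F →* H, Function.RightInverse s π := by
  choose t ht using fun a : IsFreeGroup.Generators F => hπ (IsFreeGroup.of a)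
  have hcomp : π.comp (IsFreeGroup.lift t) = MonoidHom.id F :=
    IsFreeGroup.ext_hom fun a => by simp [IsFreeGroup.lift_of, ht]
  exact ⟨IsFreeGroup.lift t, DFunLike.congr_fun hcomp⟩

lemma MulAut.ker_conjNormal {G : Type*} [Group G] (N : Subgroup G) [N.Normal] :
    (MulAut.conjNormal : G →* MulAut N).ker = Subgroup.centralizer N := by
  ext g
  simp only [MonoidHom.mem_ker, MulEquiv.ext_iff, Subtype.ext_iff, MulAut.conjNormal_apply,
    MulAut.one_apply, mul_inv_eq_iff_eq_mul, Subgroup.mem_centralizer_iff, Subtype.forall,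
    SetLike.mem_coe]
  exact forall₂_congr fun n _ => eq_comm

section Kernels

variable {G Q : Type*} [Group G] [Group Q] {φ : G →* Q}

lemma isCyclic_ker_domRestrict (hφ : IsCyclic φ.ker) (K : Subgroup G) :
    IsCyclic (φ.domRestrict K).ker := by
  rw [MonoidHom.ker_domRestrict]
  exact isCyclic_of_injective (K.subtype.subgroupComap φ.ker) fun _ _ h =>
    Subtype.ext (Subtype.ext (congrArg Subtype.val h :))

lemma isCyclic_ker_subgroupComap (hφ : IsCyclic φ.ker) (H : Subgroup Q) :
    IsCyclic (φ.subgroupComap H).ker := by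
  have hker : (φ.subgroupComap H).ker = (φ.domRestrict (H.comap φ)).ker := by
    ext x
    simp only [MonoidHom.mem_ker]
    exact Subtype.ext_iff
  rw [hker]
  exact isCyclic_ker_domRestrict hφ _

end Kernels

namespace InClassK

lemma of_surjective_of_amenable {G : Type u} {Q : Type*} [Group G] [Group Q] (φ : G →* Q)
    (hφ : Function.Surjective φ) (hker : InClassK φ.ker) (hQ : Amenable Q) : InClassK G :=
  extension G φ.ker hker
    (hQ.of_surjective (QuotientGroup.quotientKerEquivOfSurjective φ hφ).symm.toMonoidHom
      (MulEquiv.surjective _))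

lemma of_ker_le_center_of_isFreeGroup {C : Type u} {F : Type*} [Group C] [Group F]
    [IsFreeGroup F] (π : C →* F) (hπ : Function.Surjective π) (hcen : π.ker ≤ Subgroup.center C)
    (hker : Amenable π.ker) : InClassK C := by
  obtain ⟨s, hs⟩ := IsFreeGroup.exists_rightInverse π hπ
  have hfactor (c : C) : c * (s (π c))⁻¹ ∈ π.ker := by simp [MonoidHom.mem_ker, hs (π c)]
  -- `c` and `s (π c)` differ by a central factor, so they induce the same conjugation
  have hconj (c y : C) : c * y * c⁻¹ = s (π c) * y * (s (π c))⁻¹ := by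
    have hcomm := Subgroup.mem_center_iff.1 (hcen (hfactor c)) (s (π c) * y * (s (π c))⁻¹)
    calc c * y * c⁻¹
        = (c * (s (π c))⁻¹) * (s (π c) * y * (s (π c))⁻¹) * (c * (s (π c))⁻¹)⁻¹ := by group
      _ = s (π c) * y * (s (π c))⁻¹ := by rw [← hcomm]; group
  have hK : s.range.Normal := ⟨by
    rintro _ ⟨x, rfl⟩ c
    exact ⟨π c * x * (π c)⁻¹, by rw [hconj]; simp⟩⟩
  refine extension C s.range (free _ (.ofMulEquiv (MonoidHom.ofInjective hs.injective)))
    (hker.of_surjective ((QuotientGroup.mk' s.range).comp π.ker.subtype) fun y => ?_)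
  obtain ⟨c, rfl⟩ := QuotientGroup.mk'_surjective s.range y
  exact ⟨⟨_, hfactor c⟩, (QuotientGroup.mk'_eq_mk' _).2 ⟨s (π c), ⟨π c, rfl⟩, by simp⟩⟩

lemma of_isFreeGroup_of_isCyclic_ker {G : Type u} {F : Type*} [Group G] [Group F]
    [IsFreeGroup F] (φ : G →* F) (hker : IsCyclic φ.ker) : InClassK G := by
  set C := Subgroup.centralizer (φ.ker : Set G)
  have hC : InClassK C := by
    let π := (φ.domRestrict C).rangeRestrict
    have hπ : π.ker = φ.ker.subgroupOf C := by
      rw [MonoidHom.ker_rangeRestrict, MonoidHom.ker_domRestrict]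
    refine of_ker_le_center_of_isFreeGroup π (MonoidHom.rangeRestrict_surjective _) ?_ ?_
    · intro x hx
      rw [hπ, Subgroup.mem_subgroupOf] at hx
      exact Subgroup.mem_center_iff.2 fun c =>
        Subtype.ext (Subgroup.mem_centralizer_iff.1 c.2 x hx).symm
    · exact Amenable.of_isCyclic (hπ ▸ isCyclic_ker_domRestrict hker C)
  have : IsCyclic φ.ker := hker
  have : Finite (MulAut φ.ker) := .of_equiv _ (IsCyclic.mulAutMulEquiv φ.ker).symm.toEquiv
  refine of_surjective_of_amenable (MulAut.conjNormal : G →* MulAut φ.ker).rangeRestrict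
    (MonoidHom.rangeRestrict_surjective _) ?_ (Amenable.of_finite _)
  rwa [MonoidHom.ker_rangeRestrict, MulAut.ker_conjNormal]

lemma of_surjective_of_isCyclic_ker {Q : Type u} [Group Q] (hQ : InClassK Q)
    {G : Type u} [Group G] (φ : G →* Q) (hφ : Function.Surjective φ) (hker : IsCyclic φ.ker) :
    InClassK G := by
  induction hQ generalizing G with
  | free Q _ => exact of_isFreeGroup_of_isCyclic_ker φ hker
  | amenable Q hQ => exact of_surjective_of_amenable φ hφ (amenable _ (.of_isCyclic hker)) hQ
  | directedUnion Q S hdir hsup _ ih =>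
    rcases S.eq_empty_or_nonempty with rfl | hne
    · have : Subsingleton Q := Subgroup.subsingleton_iff.1 (subsingleton_of_bot_eq_top
        (by rw [← hsup, sSup_empty]))
      exact of_surjective_of_amenable φ hφ (amenable _ (.of_isCyclic hker)) (.of_finite Q)
    refine directedUnion G (Subgroup.comap φ '' S)
      (directedOn_image.2 (hdir.mono fun _ _ h => Subgroup.comap_mono h)) ?_ ?_
    · refine eq_top_iff.2 fun g _ => ?_
      obtain ⟨H, hH, hg⟩ := (Subgroup.mem_sSup_of_directedOn hne hdir).1
        (hsup ▸ Subgroup.mem_top (φ g))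
      exact Subgroup.mem_sSup_of_mem (Set.mem_image_of_mem _ hH) hg
    · rintro _ ⟨H, hH, rfl⟩
      exact ih H hH (φ.subgroupComap H) (φ.subgroupComap_surjective_of_surjective H hφ)
        (isCyclic_ker_subgroupComap hker H)
  | extension Q M _ hQM ih =>
    have hker' : ((QuotientGroup.mk' M).comp φ).ker = M.comap φ := by
      rw [← MonoidHom.comap_ker, QuotientGroup.ker_mk']
    refine of_surjective_of_amenable ((QuotientGroup.mk' M).comp φ)
      ((QuotientGroup.mk'_surjective M).comp hφ) ?_ hQM
    rw [hker']
    exact ih (φ.subgroupComap M) (φ.subgroupComap_surjective_of_surjective M hφ)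
      (isCyclic_ker_subgroupComap hker M)
  | iso Q₁ Q₂ e _ ih =>
    have hker' : (e.symm.toMonoidHom.comp φ).ker = φ.ker := by
      ext
      simp
    exact ih (e.symm.toMonoidHom.comp φ) (e.symm.surjective.comp hφ) (hker' ▸ hker)

end InClassK

/-- **The class `𝒦` is closed under extensions with cyclic kernel:** if
`1 → A → G → H → 1` is a short exact sequence (realized by a normal subgroup
`N ≤ G` with `G/N ∈ 𝒦`) with cyclic kernel `N`, then `G ∈ 𝒦`. -/
theorem classK_closed_under_cyclic_extension :
    ∀ (G : Type u) [Group G] (N : Subgroup G) [N.Normal],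
      IsCyclic ↥N → InClassK (G ⧸ N) → InClassK G := by
  intro G _ N _ hN hQ
  exact hQ.of_surjective_of_isCyclic_ker (QuotientGroup.mk' N) (QuotientGroup.mk'_surjective N)
    (by rwa [QuotientGroup.ker_mk'])
end
end

section
/- The class 𝒦 is subgroup-closed: if G ∈ 𝒦 and H is a subgroup of G, then H ∈ 𝒦. -/
open scoped ComplexConjugate

noncomputable section

universe u

/-!
Induction on the generation of `𝒦`, showing that each generating class and each closure
operation is compatible with passing to a subgroup `H`. Subgroups of free groups are free
(Nielsen–Schreier). An invariant mean on `G` restricts to `H` through the `H`-equivariant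
retraction `x ↦ x * (r x)⁻¹` given by a right transversal `r`. A directed union `⋃ Kᵢ`
intersects `H` in the directed union `⋃ (Kᵢ ∩ H)`. An extension `N → G → Q` restricts to
`N ∩ H → H → H / (N ∩ H)`, and `H / (N ∩ H)` is a subgroup of the amenable group `Q`.
-/

namespace Amenable

open BoundedContinuousFunction

variable {G K : Type*} [Group G] [Group K]

/-- The mean on `K` is `f ↦ m (f ∘ φ)`. -/
theorem of_intertwining (φ : G → K) (hφ : ∀ k : K, ∃ g : G, ∀ x, φ (g * x) = k * φ x)
    (hG : Amenable G) : Amenable K := by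
  let _ : TopologicalSpace G := ⊥
  have _ : DiscreteTopology G := ⟨rfl⟩
  let _ : TopologicalSpace K := ⊥
  have _ : DiscreteTopology K := ⟨rfl⟩
  obtain ⟨m, hpos, hone, hinv⟩ := hG
  let Φ : C(G, K) := ⟨φ, continuous_of_discreteTopology⟩
  refine ⟨m ∘ₗ (compContinuousCLM ℝ ℝ Φ).toLinearMap, fun f hf => hpos _ fun x => hf _,
    hone, fun k f => ?_⟩
  obtain ⟨g, hg⟩ := hφ k
  change m ((f.compContinuous _).compContinuous Φ) = m (f.compContinuous Φ)
  rw [← hinv g (f.compContinuous Φ)]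
  congr 1
  ext x
  simp [Φ, hg]

theorem of_surjective_s18 (π : G →* K) (hπ : Function.Surjective π) (hG : Amenable G) :
    Amenable K :=
  hG.of_intertwining π fun k => (hπ k).imp fun g hg x => by rw [map_mul, hg]

theorem of_mulEquiv (e : G ≃* K) (hG : Amenable G) : Amenable K :=
  hG.of_surjective_s18 e.toMonoidHom e.surjective

theorem subgroup (hG : Amenable G) (H : Subgroup G) : Amenable H := by
  let r : G → G := fun x => (Quotient.mk (QuotientGroup.rightRel H) x).out
  have hr : ∀ x, x * (r x)⁻¹ ∈ H := fun x =>
    QuotientGroup.rightRel_apply.mp (Quotient.mk_out (s := QuotientGroup.rightRel H) x)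
  have hr_mul : ∀ h ∈ H, ∀ x, r (h * x) = r x := fun h hh x =>
    congrArg Quotient.out <| Quotient.sound <| QuotientGroup.rightRel_apply.mpr <| by simpa
  refine hG.of_intertwining (fun x => ⟨x * (r x)⁻¹, hr x⟩) fun h => ⟨h, fun x => ?_⟩
  ext
  simp [hr_mul h h.2, mul_assoc]

theorem quotient_subgroupOf (N : Subgroup G) [N.Normal] (hQ : Amenable (G ⧸ N))
    (H : Subgroup G) : Amenable (H ⧸ N.subgroupOf H) := by
  let φ : H →* G ⧸ N := (QuotientGroup.mk' N).comp H.subtype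
  have hker : φ.ker = N.subgroupOf H := by
    rw [← MonoidHom.comap_ker, QuotientGroup.ker_mk']
    rfl
  exact (hQ.subgroup φ.range).of_mulEquiv
    ((QuotientGroup.quotientMulEquivOfEq hker).symm.trans
      (QuotientGroup.quotientKerEquivRange φ)).symm

end Amenable

namespace Subgroup

variable {G : Type*} [Group G]

def subgroupOfCommEquiv (H K : Subgroup G) : H.subgroupOf K ≃* K.subgroupOf H where
  toFun x := ⟨⟨x.1.1, x.2⟩, x.1.2⟩
  invFun x := ⟨⟨x.1.1, x.2⟩, x.1.2⟩
  left_inv _ := rfl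
  right_inv _ := rfl
  map_mul' _ _ := rfl

theorem directedOn_image_subgroupOf {S : Set (Subgroup G)} (hS : DirectedOn (· ≤ ·) S)
    (H : Subgroup G) : DirectedOn (· ≤ ·) ((·.subgroupOf H) '' S) :=
  directedOn_image.mpr fun a ha b hb =>
    (hS a ha b hb).imp fun _ ⟨hc, hac, hbc⟩ => ⟨hc, comap_mono hac, comap_mono hbc⟩

theorem sSup_image_subgroupOf_eq_top {S : Set (Subgroup G)} (hS : DirectedOn (· ≤ ·) S)
    (hsup : sSup S = ⊤) (H : Subgroup G) : sSup ((·.subgroupOf H) '' S) = ⊤ := by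
  refine eq_top_iff.mpr fun x _ => ?_
  rcases S.eq_empty_or_nonempty with rfl | hne
  · rw [sSup_empty] at hsup
    have hx : x = 1 := Subtype.ext <| mem_bot.mp <| hsup ▸ mem_top (x : G)
    exact hx ▸ one_mem _
  · obtain ⟨K, hK, hxK⟩ := (mem_sSup_of_directedOn hne hS).mp (hsup ▸ mem_top (x : G))
    exact mem_sSup_of_mem (Set.mem_image_of_mem _ hK) (mem_subgroupOf.mpr hxK)

end Subgroup

/-- **The class `𝒦` is subgroup-closed:** if `G ∈ 𝒦` and `H` is a subgroup of `G`,
then `H ∈ 𝒦`. -/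
theorem classK_subgroup_closed :
    ∀ (G : Type u) [Group G], InClassK G → ∀ H : Subgroup G, InClassK ↥H := by
  intro G _ hG
  induction hG with
  | free G _ => exact fun H => .free H inferInstance
  | amenable G hG => exact fun H => .amenable H (hG.subgroup H)
  | directedUnion G S hdir hsup _ ih =>
    refine fun H => .directedUnion H _ (Subgroup.directedOn_image_subgroupOf hdir H)
      (Subgroup.sSup_image_subgroupOf_eq_top hdir hsup H) ?_
    rintro _ ⟨K, hK, rfl⟩
    exact .iso _ _ (Subgroup.subgroupOfCommEquiv H K) (ih K hK _)
  | extension G N _ hQ ih =>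
    exact fun H => .extension H (N.subgroupOf H)
      (.iso _ _ (Subgroup.subgroupOfCommEquiv H N) (ih _)) (hQ.quotient_subgroupOf N H)
  | iso G G' e _ ih => exact fun H => .iso _ _ (e.symm.subgroupMap H).symm (ih _)
end
end

section
/- Let A and H be groups such that the automorphism group Aut(A) is abelian (in particular this holds when A is cyclic), let φ : H → Aut(A) be a homomorphism, and let G = A ⋊_φ H be the semidirect product. Then φ is trivial on the commutator subgroup [H,H]; the derived subgroup [G,G] is isomorphic to the direct product (A ∩ [G,G]) × [H,H]; and if moreover A is abelian, the second derived subgroup of G is isomorphic to the second derived subgroup of H: G'' ≅ H''. -/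
open SemidirectProduct Subgroup

/-- **Derived subgroups of semidirect products with abelian automorphism action.**
Let `A` and `H` be groups with `Aut(A)` abelian (as holds when `A` is cyclic), let
`φ : H → Aut(A)` and `G = A ⋊_φ H`. Then `φ` is trivial on the commutator subgroup
`[H,H]`; the derived subgroup `[G,G]` is isomorphic to the direct product
`(A ∩ [G,G]) × [H,H]` (where `A ∩ [G,G]` is taken inside `G` via the canonical
embedding of `A`); and if moreover `A` is abelian, then the second derived subgroups
satisfy `G'' ≅ H''`. -/
theorem semidirect_product_derived_subgroups (A H : Type*) [Group A] [Group H]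
    (hAut : ∀ α β : MulAut A, α * β = β * α) (φ : H →* MulAut A) :
    (∀ h ∈ commutator H, φ h = 1) ∧
    Nonempty ((↥(commutator (A ⋊[φ] H))) ≃*
      (↥((SemidirectProduct.inl.range : Subgroup (A ⋊[φ] H)) ⊓ commutator (A ⋊[φ] H)) ×
        ↥(commutator H))) ∧
    ((∀ x y : A, x * y = y * x) →
      Nonempty ((↥(commutator ↥(commutator (A ⋊[φ] H)))) ≃*
        (↥(commutator ↥(commutator H))))) := by
  have hker : commutator H ≤ φ.ker := by
    rw [_root_.commutator_def, Subgroup.commutator_le]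
    intro g₁ _ g₂ _
    rw [MonoidHom.mem_ker, map_commutatorElement]
    exact commutatorElement_eq_one_iff_mul_comm.mpr (hAut _ _)
  have hφ : ∀ h ∈ commutator H, φ h = 1 := fun h hh => hker hh
  set G := A ⋊[φ] H with hG
  have hcomm : ∀ (a : A), ∀ h ∈ commutator H,
      inr h * inl a = inl a * (inr h : G) := by
    intro a h hh
    have h1 : (inl (φ h a) : G) = inr h * inl a * inr h⁻¹ := inl_aut h a
    rw [hφ h hh] at h1
    simp only [MulAut.one_apply] at h1
    conv_rhs => rw [h1]
    rw [map_inv, inv_mul_cancel_right]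
  have hcomm' : ∀ x ∈ (inl.range : Subgroup G), ∀ h ∈ commutator H,
      inr h * x = x * inr h := by
    rintro x ⟨a, rfl⟩ h hh
    exact hcomm a h hh
  have hmapK : Subgroup.map rightHom (commutator G) ≤ commutator H := by
    rw [_root_.commutator_def G, Subgroup.map_commutator, _root_.commutator_def]
    exact Subgroup.commutator_mono le_top le_top
  have hπK : ∀ g ∈ commutator G, rightHom g ∈ commutator H :=
    fun g hg => hmapK (Subgroup.mem_map_of_mem _ hg)
  have hinrC : ∀ h ∈ commutator H, (inr h : G) ∈ commutator G := by
    have h2 : Subgroup.map inr (commutator H) ≤ commutator G := by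
      rw [_root_.commutator_def H, Subgroup.map_commutator, _root_.commutator_def]
      exact Subgroup.commutator_mono le_top le_top
    exact fun h hh => h2 (Subgroup.mem_map_of_mem _ hh)
  have hmemR : ∀ g ∈ commutator G,
      g * inr (rightHom g)⁻¹ ∈ (inl.range : Subgroup G) := by
    intro g hg
    rw [range_inl_eq_ker_rightHom, MonoidHom.mem_ker, map_mul, rightHom_inr,
      mul_inv_cancel]
  set N : Subgroup G := inl.range ⊓ commutator G with hN
  set C : Subgroup H := commutator H with hC
  have hmemN : ∀ g ∈ commutator G, g * inr (rightHom g)⁻¹ ∈ N :=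
    fun g hg => ⟨hmemR g hg, mul_mem hg (hinrC _ (inv_mem (hπK g hg)))⟩
  -- the isomorphism
  have e : ↥(commutator G) ≃* ↥N × ↥C := by
    refine ⟨⟨fun g => (⟨(g : G) * inr (rightHom (g : G))⁻¹, hmemN g g.2⟩,
        ⟨rightHom (g : G), hπK g g.2⟩),
      fun p => ⟨(p.1 : G) * inr (p.2 : H), mul_mem p.1.2.2 (hinrC _ p.2.2)⟩,
      ?_, ?_⟩, ?_⟩
    · intro g
      refine Subtype.ext ?_
      show ((g : G) * inr (rightHom (g : G))⁻¹) * inr (rightHom (g : G)) = (g : G)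
      rw [mul_assoc, ← map_mul, inv_mul_cancel, map_one, mul_one]
    · rintro ⟨n, h⟩
      have hrn : rightHom (n : G) = 1 := by
        obtain ⟨a, ha⟩ := n.2.1
        rw [← ha, rightHom_inl]
      have hr : rightHom ((n : G) * inr (h : H)) = (h : H) := by
        rw [map_mul, hrn, rightHom_inr, one_mul]
      refine Prod.ext (Subtype.ext ?_) (Subtype.ext ?_)
      · show ((n : G) * inr (h : H)) * inr (rightHom ((n : G) * inr (h : H)))⁻¹
          = (n : G)
        rw [hr, mul_assoc, ← map_mul, mul_inv_cancel, map_one, mul_one]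
      · exact hr
    · rintro ⟨g₁, hg₁⟩ ⟨g₂, hg₂⟩
      have key : inr (rightHom g₁)⁻¹ * (g₂ * inr (rightHom g₂)⁻¹) =
          (g₂ * inr (rightHom g₂)⁻¹) * inr (rightHom g₁)⁻¹ :=
        hcomm' _ (hmemR g₂ hg₂) _ (inv_mem (hπK g₁ hg₁))
      refine Prod.ext (Subtype.ext ?_) (Subtype.ext ?_)
      · show (g₁ * g₂) * inr (rightHom (g₁ * g₂))⁻¹ =
          (g₁ * inr (rightHom g₁)⁻¹) * (g₂ * inr (rightHom g₂)⁻¹)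
        calc (g₁ * g₂) * inr (rightHom (g₁ * g₂))⁻¹
            = g₁ * (g₂ * inr (rightHom g₂)⁻¹) * inr (rightHom g₁)⁻¹ := by
              rw [map_mul, mul_inv_rev, map_mul]; group
          _ = (g₁ * inr (rightHom g₁)⁻¹) * (g₂ * inr (rightHom g₂)⁻¹) := by
              rw [mul_assoc g₁, mul_assoc g₁, key]
      · show rightHom (g₁ * g₂) = rightHom g₁ * rightHom g₂
        rw [map_mul]
  refine ⟨hφ, ⟨e⟩, ?_⟩
  intro hA
  have hNab : ∀ n₁ n₂ : ↥N, n₁ * n₂ = n₂ * n₁ := by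
    rintro ⟨x, hx⟩ ⟨y, hy⟩
    obtain ⟨a, rfl⟩ := hx.1
    obtain ⟨b, rfl⟩ := hy.1
    refine Subtype.ext ?_
    show (inl a : G) * inl b = inl b * inl a
    rw [← map_mul, ← map_mul, hA a b]
  have hcommN : commutator ↥N = ⊥ := by
    rw [_root_.commutator_def, eq_bot_iff, Subgroup.commutator_le]
    intro g₁ _ g₂ _
    rw [Subgroup.mem_bot]
    exact commutatorElement_eq_one_iff_mul_comm.mpr (hNab g₁ g₂)
  have hmapc : Subgroup.map (e : ↥(commutator G) →* ↥N × ↥C)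
      (commutator ↥(commutator G)) = (⊥ : Subgroup ↥N).prod (commutator ↥C) := by
    have h1 : commutator ↥(commutator G) = ⁅(⊤ : Subgroup ↥(commutator G)), ⊤⁆ :=
      _root_.commutator_def _
    rw [h1, Subgroup.map_commutator, Subgroup.map_top_of_surjective _ e.surjective,
      ← Subgroup.top_prod_top, Subgroup.commutator_prod_prod,
      ← _root_.commutator_def, ← _root_.commutator_def, hcommN]
  exact ⟨((e.subgroupMap (commutator ↥(commutator G))).trans
    (MulEquiv.subgroupCongr hmapc)).trans
    ((Subgroup.prodEquiv _ _).trans MulEquiv.uniqueProd)⟩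
end
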